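/- arXiv:2103.14667 — 6 statements merged into one kernel-verified Lean document; each statement's English description precedes it below -/
import Mathlib

section
/- For every finite multigraph G and every 3-edge-connected component A of G, the torso torso(A) is a 3-edge-connected graph: every two distinct vertices of torso(A) are joined by three pairwise edge-disjoint paths in torso(A). -/
namespace TCW

/-- A multigraph: a type of vertices, a type of edges, and an incidence map
assigning to each edge its (unordered) pair of endpoints. -/
structure Multigraph (V E : Type) where
  inc : E → Sym2 V

namespace Multigraph

variable {V E : Type}

/-- The multigraph has no loops. -/
def Loopless (G : Multigraph V E) : Prop := ∀ e : E, ¬ (G.inc e).IsDiag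

/-- Walks in a multigraph. -/
inductive Walk (G : Multigraph V E) : V → V → Type where
  | nil (v : V) : Walk G v v
  | cons {u v w : V} (e : E) (he : G.inc e = s(u, v)) (tail : Walk G v w) : Walk G u w

namespace Walk

variable {G : Multigraph V E}

/-- The list of edges traversed by a walk. -/
def edges : ∀ {u v : V}, G.Walk u v → List E
  | _, _, .nil _ => []
  | _, _, .cons e _ p => e :: p.edges

/-- The list of vertices visited by a walk (in order). -/
def support : ∀ {u v : V}, G.Walk u v → List V
  | u, _, .nil _ => [u]
  | u, _, .cons _ _ p => u :: p.support

/-- A walk is a path if it visits no vertex twice. -/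
def IsPath {u v : V} (p : G.Walk u v) : Prop := p.support.Nodup

/-- A closed walk is a cycle if it is nonempty, repeats no edge, and its
vertices are pairwise distinct except for the common endpoint. -/
def IsCycle {u : V} (p : G.Walk u u) : Prop :=
  p.edges ≠ [] ∧ p.edges.Nodup ∧ p.support.tail.Nodup

end Walk

/-- Two walks are edge-disjoint if they share no edge. -/
def EdgeDisjoint {G : Multigraph V E} {u v u' v' : V}
    (p : G.Walk u v) (q : G.Walk u' v') : Prop :=
  ∀ e : E, e ∈ p.edges → e ∉ q.edges

/-- There exist three pairwise edge-disjoint paths from `u` to `v`. -/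
def ThreePaths (G : Multigraph V E) (u v : V) : Prop :=
  ∃ (p₁ p₂ p₃ : G.Walk u v), p₁.IsPath ∧ p₂.IsPath ∧ p₃.IsPath ∧
    EdgeDisjoint p₁ p₂ ∧ EdgeDisjoint p₁ p₃ ∧ EdgeDisjoint p₂ p₃

/-- `u` and `v` are 3-edge-connected: they are equal or joined by three
pairwise edge-disjoint paths. -/
def ThreeEC (G : Multigraph V E) (u v : V) : Prop := u = v ∨ ThreePaths G u v

/-- The set of edges crossing the vertex set `A` (i.e. the cut `δ(A)`). -/
def delta (G : Multigraph V E) (A : Set V) : Set E :=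
  {e | ∃ x y, G.inc e = s(x, y) ∧ x ∈ A ∧ y ∉ A}

/-- The edge sets of cycles of `G`. -/
def cycleSets (G : Multigraph V E) : Set (Set E) :=
  {C | ∃ (u : V) (p : G.Walk u u), p.IsCycle ∧ C = {e | e ∈ p.edges}}

/-- A cactus: any two distinct cycles are edge-disjoint (equivalently, every
2-connected block is a single edge or a cycle). -/
def IsCactus (G : Multigraph V E) : Prop :=
  ∀ C₁ ∈ G.cycleSets, ∀ C₂ ∈ G.cycleSets, C₁ ≠ C₂ → C₁ ∩ C₂ = ∅

/-- The quotient multigraph of `G` by a setoid on vertices: vertices are the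
equivalence classes, and every edge of `G` whose endpoints lie in different
classes gives one edge; edges inside a class are discarded. -/
def quot (G : Multigraph V E) (s : Setoid V) :
    Multigraph (Quotient s) {e : E // ¬ (Sym2.map (Quotient.mk s) (G.inc e)).IsDiag} :=
  ⟨fun e => Sym2.map (Quotient.mk s) (G.inc e.1)⟩

/-- The setoid of 3-edge-connectedness (its classes are the
3-edge-connected components). -/
def tccSetoid (G : Multigraph V E) : Setoid V := Relation.EqvGen.setoid (ThreeEC G)

/-- `H` is an immersion of `G`: vertices of `H` map injectively to vertices
of `G`, and edges of `H` map to pairwise edge-disjoint paths of `G`, the path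
of an edge connecting the images of its endpoints. -/
def IsImmersion {V₁ E₁ V₂ E₂ : Type} (H : Multigraph V₁ E₁) (G : Multigraph V₂ E₂) : Prop :=
  ∃ (f : V₁ → V₂) (P : E₁ → (u : V₂) × (v : V₂) × G.Walk u v),
    Function.Injective f ∧
    (∀ e : E₁, Sym2.map f (H.inc e) = s((P e).1, (P e).2.1)) ∧
    (∀ e : E₁, (P e).2.2.IsPath) ∧
    (∀ e₁ e₂ : E₁, e₁ ≠ e₂ → EdgeDisjoint (P e₁).2.2 (P e₂).2.2)

section Torso

variable (G : Multigraph V E) (A : Set V)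

/-- Two vertices outside `A` are related if joined by a walk avoiding `A`. -/
def compRel (x y : {v : V // v ∉ A}) : Prop :=
  ∃ p : G.Walk x.1 y.1, ∀ w ∈ p.support, w ∉ A

/-- The setoid whose classes are the connected components of `G - A`. -/
def compSetoid : Setoid {v : V // v ∉ A} := Relation.EqvGen.setoid (G.compRel A)

/-- The component `Z` of `G - A` is attached to the vertex `a ∈ A` by some edge. -/
def Attached (Z : Quotient (G.compSetoid A)) (a : {v : V // v ∈ A}) : Prop :=
  ∃ (e : E) (z : {v : V // v ∉ A}), Quotient.mk (G.compSetoid A) z = Z ∧ G.inc e = s(a.1, z.1)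

/-- Edges of `G` with both endpoints in `A`, recorded together with their
endpoints as vertices of the torso. -/
def InnerE : Type :=
  {q : E × Sym2 {v : V // v ∈ A} // G.inc q.1 = Sym2.map Subtype.val q.2}

/-- Replacement edges: one for each connected component of `G - A` having
exactly two (distinct) neighbours in `A`; its endpoints are those neighbours. -/
def RepE : Type :=
  {q : Quotient (G.compSetoid A) × Sym2 {v : V // v ∈ A} //
    ¬ q.2.IsDiag ∧ {a | a ∈ q.2} = {a | G.Attached A q.1 a}}

/-- The torso of `A` in `G`: keep the edges inside `A`, and for each
connected component of `G - A` with exactly two neighbours in `A`, add a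
replacement edge between those neighbours. -/
def torso : Multigraph {v : V // v ∈ A} (G.InnerE A ⊕ G.RepE A) :=
  ⟨Sum.elim (fun q => q.1.2) (fun q => q.1.2)⟩

end Torso

end Multigraph

open Multigraph

/-- A tree-cut decomposition of `G` with nodes `N`: a tree on `N` together
with a near-partition of the vertices of `G` into bags indexed by `N`. -/
structure TreeCutDecomp (G : Multigraph V E) (N : Type) where
  tree : SimpleGraph N
  isTree : tree.IsTree
  bag : N → Set V
  bag_disjoint : ∀ n₁ n₂ : N, n₁ ≠ n₂ → bag n₁ ∩ bag n₂ = ∅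
  bag_covers : ∀ v : V, ∃ t : N, v ∈ bag t

namespace TreeCutDecomp

variable {V E N : Type} {G : Multigraph V E}

/-- The adhesion of the tree edge `n₁n₂`: all edges of `G` whose endpoints lie
in bags of nodes in different components of the tree minus that edge. -/
def adhE (D : TreeCutDecomp G N) (n₁ n₂ : N) : Set E :=
  {e | ∃ (x y : V) (p q : N), G.inc e = s(x, y) ∧ x ∈ D.bag p ∧ y ∈ D.bag q ∧
    ¬ (D.tree.deleteEdges {s(n₁, n₂)}).Reachable p q}

/-- The adhesion of a node: the union of the adhesions of the bold
(adhesion of size at least 3) tree edges incident to it. -/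
def adhN (D : TreeCutDecomp G N) (t : N) : Set E :=
  {e | ∃ n : N, D.tree.Adj n t ∧ 3 ≤ (D.adhE n t).ncard ∧ e ∈ D.adhE n t}

/-- The decomposition has adhesion-width at most `a`. -/
def AdhWidthLE (D : TreeCutDecomp G N) (a : ℕ) : Prop := ∀ t : N, (D.adhN t).ncard ≤ a

/-- The decomposition has bag-width at most `b`. -/
def BagWidthLE (D : TreeCutDecomp G N) (b : ℕ) : Prop := ∀ t : N, (D.bag t).ncard ≤ b

/-- The adhesion-width: the maximum size of a node adhesion. -/
noncomputable def adhWidth [Fintype N] (D : TreeCutDecomp G N) : ℕ :=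
  Finset.univ.sup fun t : N => (D.adhN t).ncard

/-- The bag-width: the maximum size of a bag. -/
noncomputable def bagWidth [Fintype N] (D : TreeCutDecomp G N) : ℕ :=
  Finset.univ.sup fun t : N => (D.bag t).ncard

open Classical in
/-- GPRTW's width: the maximum over tree edges of the adhesion size, and over
nodes `t` of `|X_t|` plus the number of bold tree edges incident to `t`. -/
noncomputable def gprtwWidth [Fintype N] (D : TreeCutDecomp G N) : ℕ :=
  max
    (Finset.univ.sup fun p : N × N =>
      if D.tree.Adj p.1 p.2 then (D.adhE p.1 p.2).ncard else 0)
    (Finset.univ.sup fun t : N =>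
      (D.bag t).ncard + {n : N | D.tree.Adj n t ∧ 3 ≤ (D.adhE n t).ncard}.ncard)

end TreeCutDecomp

/-- A slab in `G`: a connected subgraph (given by its vertex and edge sets)
together with a nonempty core that is 3-edge-connected in `G`. -/
structure Slab (G : Multigraph V E) where
  verts : Set V
  edgeSet : Set E
  edge_mem : ∀ e ∈ edgeSet, ∀ x ∈ G.inc e, x ∈ verts
  conn : ∀ x ∈ verts, ∀ y ∈ verts, ∃ p : G.Walk x y,
    (∀ w ∈ p.support, w ∈ verts) ∧ (∀ e ∈ p.edges, e ∈ edgeSet)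
  core : Set V
  core_sub : core ⊆ verts
  core_nonempty : core.Nonempty
  core_tec : ∀ x ∈ core, ∀ y ∈ core, ThreeEC G x y

/-- A set `F` of edges disconnects a slab if two core vertices lie in
different components of the slab minus `F`. -/
def Slab.Disconnects {G : Multigraph V E} (F : Set E) (s : Slab G) : Prop :=
  ∃ x ∈ s.core, ∃ y ∈ s.core, ¬ ∃ p : G.Walk x y,
    (∀ w ∈ p.support, w ∈ s.verts) ∧ (∀ e ∈ p.edges, e ∈ s.edgeSet ∧ e ∉ F)

/-- A bramble: a family of pairwise touching slabs (cores pairwise intersect). -/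
def IsBramble {G : Multigraph V E} (B : Set (Slab G)) : Prop :=
  ∀ s₁ ∈ B, ∀ s₂ ∈ B, (s₁.core ∩ s₂.core).Nonempty

/-- The bramble has adhesion-order at least `a`: every edge set disconnecting
all its slabs has at least `a` edges. -/
def AdhOrderGE {G : Multigraph V E} (B : Set (Slab G)) (a : ℕ) : Prop :=
  ∀ F : Set E, (∀ s ∈ B, Slab.Disconnects F s) → a ≤ F.ncard

/-- The bramble has bag-order at least `b`: every core has at least `b` vertices. -/
def BagOrderGE {G : Multigraph V E} (B : Set (Slab G)) (b : ℕ) : Prop :=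
  ∀ s ∈ B, b ≤ s.core.ncard

/-- An `(a,b)`-tangle: a consistent orientation of all edge separations of
order `< a` avoiding the collection `Σ_{a,b}` of small stars. An oriented
separation `(A, B)` is represented by its first side `A` (so `B = Aᶜ`). -/
def IsTangle (G : Multigraph V E) (a b : ℕ) (L : Set (Set V)) : Prop :=
  (∀ A ∈ L, (G.delta A).ncard < a) ∧
  (∀ A : Set V, (G.delta A).ncard < a → (A ∈ L ↔ Aᶜ ∉ L)) ∧
  (∀ A ∈ L, ∀ C ∈ L, (Aᶜ ∩ Cᶜ).Nonempty) ∧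
  (∀ σ : Set (Set V), σ ⊆ L → σ.Nonempty →
    (∀ A ∈ σ, ∀ C ∈ σ, A ≠ C → A ∩ C = ∅) →
    ¬ ((⋃ A ∈ {A ∈ σ | 3 ≤ (G.delta A).ncard}, G.delta A).ncard < a ∧
       (⋂ A ∈ σ, Aᶜ).ncard < b))


namespace Multigraph

variable {V E : Type} {G : Multigraph V E}

namespace Walk

def append : ∀ {u v w : V}, G.Walk u v → G.Walk v w → G.Walk u w
  | _, _, _, .nil _, q => q
  | _, _, _, .cons e he p, q => .cons e he (p.append q)

@[simp] lemma edges_append {u v w : V} (p : G.Walk u v) (q : G.Walk v w) :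
    (p.append q).edges = p.edges ++ q.edges := by
  induction p with
  | nil => simp [append, edges]
  | cons e he p ih => simp [append, edges, ih]

@[simp] lemma start_mem_support {u v : V} (p : G.Walk u v) : u ∈ p.support := by
  cases p <;> simp [support]

@[simp] lemma end_mem_support {u v : V} (p : G.Walk u v) : v ∈ p.support := by
  induction p with
  | nil => simp [support]
  | cons e he p ih => simp [support]; right; exact ih

lemma support_ne_nil {u v : V} (p : G.Walk u v) : p.support ≠ [] := by
  cases p <;> simp [support]

lemma mem_support_append_iff {u v w : V} (p : G.Walk u v) (q : G.Walk v w) {x : V} :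
    x ∈ (p.append q).support ↔ x ∈ p.support ∨ x ∈ q.support := by
  induction p with
  | nil =>
    show x ∈ q.support ↔ _
    constructor
    · exact Or.inr
    · rintro (h | h)
      · simp [support] at h; subst h; exact q.start_mem_support
      · exact h
  | cons e he p ih => simp [append, support, List.mem_cons, ih, or_assoc]

def reverse : ∀ {u v : V}, G.Walk u v → G.Walk v u
  | _, _, .nil v => .nil v
  | _, _, .cons e he p => p.reverse.append (.cons e (by rw [he, Sym2.eq_swap]) (.nil _))

lemma mem_edges_reverse {u v : V} {p : G.Walk u v} {e : E} :
    e ∈ p.reverse.edges ↔ e ∈ p.edges := by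
  induction p with
  | nil => simp [reverse]
  | cons f hf p ih => simp [reverse, edges, ih]; tauto

lemma mem_support_reverse {u v : V} {p : G.Walk u v} {x : V} :
    x ∈ p.reverse.support ↔ x ∈ p.support := by
  induction p with
  | nil => simp [reverse]
  | cons f hf p ih =>
    simp only [reverse]
    rw [mem_support_append_iff, ih]
    simp only [support, List.mem_cons, List.not_mem_nil, or_false]
    have h2 := p.start_mem_support
    constructor
    · rintro (h | h | h)
      · exact Or.inr h
      · subst h; exact Or.inr h2
      · exact Or.inl h
    · rintro (h | h)
      · right; right; exact h
      · left; exact h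

end Walk
end Multigraph

namespace Multigraph
variable {V E : Type} {G : Multigraph V E}
namespace Walk

lemma mem_support_of_mem_edges {u v : V} {p : G.Walk u v} {e : E} {x : V}
    (he : e ∈ p.edges) (hx : x ∈ G.inc e) : x ∈ p.support := by
  induction p with
  | nil => simp [edges] at he
  | cons f hf p ih =>
    simp only [edges, List.mem_cons] at he
    rcases he with rfl | he
    · rw [hf, Sym2.mem_iff] at hx
      rcases hx with rfl | rfl
      · exact start_mem_support _
      · simp only [support, List.mem_cons]; right; exact p.start_mem_support
    · simp only [support, List.mem_cons]; right; exact ih he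

lemma exists_crossing_edge {u v : V} (p : G.Walk u v) (S : Set V)
    (hu : u ∈ S) (hv : v ∉ S) : ∃ e ∈ p.edges, e ∈ G.delta S := by
  induction p with
  | nil => exact absurd hu hv
  | cons f hf p ih =>
    rename_i x m y
    by_cases hm : m ∈ S
    · obtain ⟨e, he, hd⟩ := ih hm hv
      exact ⟨e, by simp [edges, he], hd⟩
    · exact ⟨f, by simp [edges], _, _, hf, hu, hm⟩

lemma exists_suffix {u v : V} (p : G.Walk u v) (w : V) (hw : w ∈ p.support) :
    ∃ q : G.Walk w v, (∀ e ∈ q.edges, e ∈ p.edges) ∧ q.support.Sublist p.support ∧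
      w ∉ q.support.tail := by
  induction p with
  | nil =>
    simp only [support, List.mem_singleton] at hw
    subst hw
    exact ⟨.nil _, by simp [edges], by simp, by simp [support]⟩
  | cons f hf p ih =>
    rename_i x m y
    by_cases h : w ∈ p.support
    · obtain ⟨q, hq1, hq2, hq3⟩ := ih h
      exact ⟨q, fun e he => by simp [edges, hq1 e he],
        hq2.trans (List.sublist_cons_self _ _), hq3⟩
    · have : w = x := by
        simp only [support, List.mem_cons] at hw
        tauto
      subst this
      exact ⟨.cons f hf p, fun e he => he, List.Sublist.refl _, h⟩

lemma exists_prefix_to_set {a b : V} (p : G.Walk a b) (T : Set V) (hb : b ∈ T) :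
    ∃ z ∈ T, ∃ q : G.Walk a z, (∀ e ∈ q.edges, e ∈ p.edges) ∧
      (∀ x ∈ q.support, x ∈ p.support) ∧ (∀ x ∈ q.support.dropLast, x ∉ T) := by
  induction p with
  | nil =>
    exact ⟨_, hb, .nil _, by simp [edges], by simp, by simp [support]⟩
  | cons f hf p ih =>
    rename_i x m y
    by_cases ha : x ∈ T
    · refine ⟨_, ha, .nil _, by simp [edges], ?_, by simp [support]⟩
      intro x hx
      simp [support] at hx; simp [support, hx]
    · obtain ⟨z, hz, q, hq1, hq2, hq3⟩ := ih hb
      refine ⟨z, hz, .cons f hf q, fun e he => ?_, fun x hx => ?_, fun x hx => ?_⟩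
      · simp only [edges, List.mem_cons] at he ⊢
        rcases he with rfl | he
        · exact Or.inl rfl
        · exact Or.inr (hq1 e he)
      · simp only [support, List.mem_cons] at hx ⊢
        rcases hx with rfl | hx
        · exact Or.inl rfl
        · exact Or.inr (hq2 x hx)
      · have hne := q.support_ne_nil
        simp only [support] at hx
        rw [List.dropLast_cons_of_ne_nil hne, List.mem_cons] at hx
        rcases hx with rfl | hx
        · exact ha
        · exact hq3 x hx

lemma IsPath.edges_nodup {u v : V} {p : G.Walk u v} (hp : p.IsPath) : p.edges.Nodup := by
  induction p with
  | nil => simp [edges]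
  | cons f hf p ih =>
    rename_i x m y
    have hp' : p.IsPath ∧ x ∉ p.support := by
      unfold IsPath at hp ⊢
      simp only [support, List.nodup_cons] at hp
      exact ⟨hp.2, hp.1⟩
    simp only [edges, List.nodup_cons]
    refine ⟨fun hmem => hp'.2 ?_, ih hp'.1⟩
    exact mem_support_of_mem_edges hmem (by rw [hf]; exact Sym2.mem_mk_left _ _)

lemma exists_split {a b : V} (p : G.Walk a b) (hp : p.IsPath) (w : V) (hw : w ∈ p.support) :
    ∃ (p₁ : G.Walk a w) (p₂ : G.Walk w b),
      (∀ e ∈ p₁.edges, e ∈ p.edges) ∧ (∀ e ∈ p₂.edges, e ∈ p.edges) ∧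
      EdgeDisjoint p₁ p₂ ∧
      (∀ x ∈ p₁.support, x ∈ p.support) ∧ (∀ x ∈ p₂.support, x ∈ p.support) := by
  induction p with
  | nil =>
    simp only [support, List.mem_singleton] at hw
    subst hw
    exact ⟨.nil _, .nil _, by simp [edges], by simp [edges], by simp [EdgeDisjoint, edges],
      by simp, by simp⟩
  | cons f hf p ih =>
    rename_i u m _
    have hmem : u ∉ p.support := by
      unfold IsPath at hp
      simp only [support, List.nodup_cons] at hp
      exact hp.1
    have hp' : p.IsPath := by
      unfold IsPath at hp ⊢
      simp only [support, List.nodup_cons] at hp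
      exact hp.2
    by_cases ha : u = w
    · subst ha
      exact ⟨.nil _, .cons f hf p, by simp [edges], fun e he => he,
        by simp [EdgeDisjoint, edges], by simp [support], fun x hx => hx⟩
    · have hw' : w ∈ p.support := by
        simp only [support, List.mem_cons] at hw
        tauto
      obtain ⟨q₁, q₂, h1, h2, h3, h4, h5⟩ := ih hp' hw'
      refine ⟨.cons f hf q₁, q₂, fun e he => ?_, fun e he => ?_, fun e he => ?_,
        fun x hx => ?_, fun x hx => ?_⟩
      · simp only [edges, List.mem_cons] at he ⊢
        rcases he with rfl | he
        · exact Or.inl rfl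
        · exact Or.inr (h1 e he)
      · simp only [edges, List.mem_cons]
        exact Or.inr (h2 e he)
      · simp only [edges, List.mem_cons] at he
        rcases he with rfl | he
        · intro hmem2
          exact hmem (mem_support_of_mem_edges (h2 e hmem2)
            (by rw [hf]; exact Sym2.mem_mk_left _ _))
        · exact h3 e he
      · simp only [support, List.mem_cons] at hx ⊢
        rcases hx with rfl | hx
        · exact Or.inl rfl
        · exact Or.inr (h4 x hx)
      · simp only [support, List.mem_cons]
        exact Or.inr (h5 x hx)

lemma exists_path {u v : V} (p : G.Walk u v) :
    ∃ q : G.Walk u v, q.IsPath ∧ (∀ e ∈ q.edges, e ∈ p.edges) ∧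
      (∀ x ∈ q.support, x ∈ p.support) := by
  induction p with
  | nil => exact ⟨.nil _, by simp [IsPath, support], by simp, by simp⟩
  | cons f hf p ih =>
    rename_i x m y
    obtain ⟨q, hq, hqe, hqs⟩ := ih
    by_cases h : x ∈ q.support
    · obtain ⟨r, hr1, hr2, hr3⟩ := exists_suffix q _ h
      refine ⟨r, ?_, fun e he => by simp [edges, hqe e (hr1 e he)],
        fun x hx => by simp [support]; right; exact hqs x (hr2.mem hx)⟩
      exact List.Nodup.sublist hr2 hq
    · refine ⟨.cons f hf q, ?_, fun e he => ?_, fun x hx => ?_⟩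
      · unfold IsPath at hq ⊢
        simp only [support, List.nodup_cons]
        exact ⟨h, hq⟩
      · simp only [edges, List.mem_cons] at he ⊢
        rcases he with rfl | he
        · exact Or.inl rfl
        · exact Or.inr (hqe e he)
      · simp only [support, List.mem_cons] at hx ⊢
        rcases hx with rfl | hx
        · exact Or.inl rfl
        · exact Or.inr (hqs x hx)

end Walk
end Multigraph

namespace Multigraph
variable {V E : Type} {G : Multigraph V E}

lemma exists_three_distinct {α : Type*} {S : Set α} (h : 3 ≤ S.ncard) :
    ∃ a b c, a ∈ S ∧ b ∈ S ∧ c ∈ S ∧ a ≠ b ∧ a ≠ c ∧ b ≠ c := by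
  obtain ⟨t, hts, ht⟩ := Set.exists_subset_card_eq h
  rw [Set.ncard_eq_three] at ht
  obtain ⟨a, b, c, h1, h2, h3, rfl⟩ := ht
  exact ⟨a, b, c, hts (by simp), hts (by simp), hts (by simp), h1, h2, h3⟩

lemma three_le_ncard {α : Type*} {S : Set α} (hfin : S.Finite) {a b c : α}
    (ha : a ∈ S) (hb : b ∈ S) (hc : c ∈ S) (h1 : a ≠ b) (h2 : a ≠ c) (h3 : b ≠ c) :
    3 ≤ S.ncard := by
  have : ({a, b, c} : Set α).ncard = 3 := Set.ncard_eq_three.mpr ⟨a, b, c, h1, h2, h3, rfl⟩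
  rw [← this]
  exact Set.ncard_le_ncard (by intro x hx; rcases hx with rfl | rfl | rfl <;> assumption) hfin

lemma mem_delta_of {S : Set V} {e : E} {x y : V} (he : G.inc e = s(x, y))
    (hx : x ∈ S) (hy : y ∉ S) : e ∈ G.delta S := ⟨x, y, he, hx, hy⟩

lemma delta_compl_subset (S : Set V) : G.delta Sᶜ ⊆ G.delta S := by
  rintro e ⟨x, y, he, hx, hy⟩
  exact ⟨y, x, by rw [he, Sym2.eq_swap], by simpa using hy, hx⟩

lemma delta_compl (S : Set V) : G.delta Sᶜ = G.delta S := by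
  refine subset_antisymm (delta_compl_subset S) ?_
  have := delta_compl_subset (G := G) Sᶜ
  rwa [compl_compl] at this

/-- Three pairwise edge-disjoint walks crossing a cut force the cut to have ≥ 3 edges. -/
lemma three_le_delta_of_walks [Finite E] {z : V} {a₁ a₂ a₃ : V} {X : Set V}
    (w₁ : G.Walk z a₁) (w₂ : G.Walk z a₂) (w₃ : G.Walk z a₃)
    (hz : z ∈ X) (h1 : a₁ ∉ X) (h2 : a₂ ∉ X) (h3 : a₃ ∉ X)
    (d12 : EdgeDisjoint w₁ w₂) (d13 : EdgeDisjoint w₁ w₃) (d23 : EdgeDisjoint w₂ w₃) :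
    3 ≤ (G.delta X).ncard := by
  obtain ⟨e₁, he₁, hd₁⟩ := w₁.exists_crossing_edge X hz h1
  obtain ⟨e₂, he₂, hd₂⟩ := w₂.exists_crossing_edge X hz h2
  obtain ⟨e₃, he₃, hd₃⟩ := w₃.exists_crossing_edge X hz h3
  exact three_le_ncard (Set.toFinite _) hd₁ hd₂ hd₃
    (fun h => d12 e₁ he₁ (h ▸ he₂)) (fun h => d13 e₁ he₁ (h ▸ he₃))
    (fun h => d23 e₂ he₂ (h ▸ he₃))

lemma cut_of_threePaths [Finite E] {u v : V} (h : ThreePaths G u v) :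
    ∀ S : Set V, u ∈ S → v ∉ S → 3 ≤ (G.delta S).ncard := by
  obtain ⟨p₁, p₂, p₃, _, _, _, d12, d13, d23⟩ := h
  intro S hu hv
  exact three_le_delta_of_walks p₁ p₂ p₃ hu hv hv hv d12 d13 d23

lemma cut_of_threeEC [Finite E] {u v : V} (h : ThreeEC G u v) :
    ∀ S : Set V, u ∈ S → v ∉ S → 3 ≤ (G.delta S).ncard := by
  rcases h with rfl | h
  · intro S hu hv; exact absurd hu hv
  · exact cut_of_threePaths h

end Multigraph

namespace Multigraph
variable {V E : Type} {G : Multigraph V E}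

lemma card_quotient_lt [Finite V] (s : Setoid V) {a b : V} (hne : a ≠ b)
    (h : Quotient.mk s a = Quotient.mk s b) : Nat.card (Quotient s) < Nat.card V := by
  classical
  have : Fintype V := Fintype.ofFinite V
  have hs : Function.Surjective (Quotient.mk s) := Quotient.mk_surjective
  have hginj : Function.Injective (Function.surjInv hs) := Function.injective_surjInv hs
  have hmiss : (∀ c, Function.surjInv hs c ≠ a) ∨ (∀ c, Function.surjInv hs c ≠ b) := by
    by_contra hcon
    push_neg at hcon
    obtain ⟨⟨c, hc⟩, ⟨d, hd⟩⟩ := hcon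
    have hc' : c = Quotient.mk s a := by rw [← Function.surjInv_eq hs c, hc]
    have hd' : d = Quotient.mk s b := by rw [← Function.surjInv_eq hs d, hd]
    have : c = d := by rw [hc', hd', h]
    exact hne (by rw [← hc, ← hd, this])
  rcases hmiss with hm | hm
  · have : Nat.card (Quotient s) ≤ Nat.card {x : V // x ≠ a} :=
      Nat.card_le_card_of_injective (fun c => ⟨Function.surjInv hs c, hm c⟩)
        (fun c d hcd => hginj (congrArg Subtype.val hcd))
    refine lt_of_le_of_lt this ?_
    rw [Nat.card_eq_fintype_card, Nat.card_eq_fintype_card]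
    exact Fintype.card_subtype_lt (x := a) (by simp)
  · have : Nat.card (Quotient s) ≤ Nat.card {x : V // x ≠ b} :=
      Nat.card_le_card_of_injective (fun c => ⟨Function.surjInv hs c, hm c⟩)
        (fun c d hcd => hginj (congrArg Subtype.val hcd))
    refine lt_of_le_of_lt this ?_
    rw [Nat.card_eq_fintype_card, Nat.card_eq_fintype_card]
    exact Fintype.card_subtype_lt (x := b) (by simp)

/-- The setoid that identifies all vertices outside `S`. -/
def collapse (S : Set V) : Setoid V :=
  ⟨fun a b => a = b ∨ (a ∉ S ∧ b ∉ S), by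
    constructor
    · intro a; exact Or.inl rfl
    · rintro a b (rfl | h); exacts [Or.inl rfl, Or.inr ⟨h.2, h.1⟩]
    · rintro a b c (rfl | h) (rfl | h')
      · exact Or.inl rfl
      · exact Or.inr h'
      · exact Or.inr h
      · exact Or.inr ⟨h.1, h'.2⟩⟩

lemma collapse_mk_eq {S : Set V} {a b : V} :
    Quotient.mk (collapse S) a = Quotient.mk (collapse S) b ↔ (a = b ∨ (a ∉ S ∧ b ∉ S)) :=
  ⟨fun h => Quotient.exact h, fun h => Quotient.sound h⟩

lemma ncard_delta_preimage_le [Finite E] (s : Setoid V) (X : Set (Quotient s)) :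
    (G.delta (Quotient.mk s ⁻¹' X)).ncard ≤ ((G.quot s).delta X).ncard := by
  have hsub : G.delta (Quotient.mk s ⁻¹' X) ⊆ Subtype.val '' ((G.quot s).delta X) := by
    rintro e ⟨x, y, he, hx, hy⟩
    have hnd : ¬ (Sym2.map (Quotient.mk s) (G.inc e)).IsDiag := by
      rw [he, Sym2.map_pair_eq, Sym2.mk_isDiag_iff]
      intro hcon
      exact hy (by simpa only [Set.mem_preimage, ← hcon] using hx)
    refine ⟨⟨e, hnd⟩, ⟨Quotient.mk s x, Quotient.mk s y, ?_, hx, hy⟩, rfl⟩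
    show Sym2.map _ (G.inc e) = _
    rw [he, Sym2.map_pair_eq]
  calc (G.delta (Quotient.mk s ⁻¹' X)).ncard
      ≤ (Subtype.val '' ((G.quot s).delta X)).ncard := Set.ncard_le_ncard hsub (Set.toFinite _)
    _ ≤ ((G.quot s).delta X).ncard := Set.ncard_image_le (Set.toFinite _)

namespace Walk

/-- Transfer a walk along an edge-renaming. -/
def transfer {E' : Type} {G' : Multigraph V E'} (φ : E' → E)
    (hφ : ∀ e, G.inc (φ e) = G'.inc e) : ∀ {u v : V}, G'.Walk u v → G.Walk u v
  | _, _, .nil w => .nil w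
  | _, _, .cons e he p => .cons (φ e) (by rw [hφ, he]) (p.transfer φ hφ)

@[simp] lemma edges_transfer {E' : Type} {G' : Multigraph V E'} (φ : E' → E)
    (hφ : ∀ e, G.inc (φ e) = G'.inc e) {u v : V} (p : G'.Walk u v) :
    (p.transfer φ hφ).edges = p.edges.map φ := by
  induction p with
  | nil => rfl
  | cons e he p ih => simp [transfer, edges, ih]

end Walk

/-- Lift a walk of the quotient that avoids the collapsed class. -/
lemma quot_walk_lift (S : Set V) {α β : Quotient (collapse S)}
    (d : (G.quot (collapse S)).Walk α β)
    (hd : ∀ γ ∈ d.support, ∀ w : V, w ∉ S → γ ≠ Quotient.mk (collapse S) w) :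
    ∀ (x : V), x ∈ S → Quotient.mk (collapse S) x = α →
    ∃ (y : V), y ∈ S ∧ Quotient.mk (collapse S) y = β ∧
      ∃ q : G.Walk x y, q.edges = d.edges.map Subtype.val ∧ ∀ z ∈ q.support, z ∈ S := by
  induction d with
  | nil =>
    intro x hx hα
    exact ⟨x, hx, hα, .nil x, by simp [Walk.edges], by simp [Walk.support, hx]⟩
  | cons f hf d ih =>
    intro x hx hα
    rename_i α' γ β'
    obtain ⟨p₀, q₀, hpq⟩ : ∃ p₀ q₀, G.inc f.1 = s(p₀, q₀) := by
      induction (G.inc f.1) using Sym2.ind with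
      | _ a b => exact ⟨a, b, rfl⟩
    have hf' : Sym2.map (Quotient.mk (collapse S)) (G.inc f.1) = s(α', γ) := hf
    rw [hpq, Sym2.map_pair_eq, Sym2.eq_iff] at hf'
    have hγsup : γ ∈ (Walk.cons f hf d).support := by
      simp only [Walk.support, List.mem_cons]; right; exact d.start_mem_support
    have hγ : ∀ w : V, w ∉ S → γ ≠ Quotient.mk (collapse S) w := hd γ hγsup
    have key : ∃ z, z ∈ S ∧ Quotient.mk (collapse S) z = γ ∧ G.inc f.1 = s(x, z) := by
      rcases hf' with ⟨h1, h2⟩ | ⟨h1, h2⟩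
      · -- p₀ in class α', q₀ in class γ
        have hq₀S : q₀ ∈ S := by
          by_contra hq
          exact hγ q₀ hq h2.symm
        have hp₀ : p₀ = x := by
          rw [← hα] at h1
          rcases collapse_mk_eq.mp h1 with h | h
          · exact h
          · exact absurd hx h.2
        exact ⟨q₀, hq₀S, h2, by rw [hpq, hp₀]⟩
      · have hp₀S : p₀ ∈ S := by
          by_contra hp
          exact hγ p₀ hp h1.symm
        have hq₀ : q₀ = x := by
          rw [← hα] at h2
          rcases collapse_mk_eq.mp h2 with h | h
          · exact h
          · exact absurd hx h.2
        exact ⟨p₀, hp₀S, h1, by rw [hpq, hq₀, Sym2.eq_swap]⟩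
    obtain ⟨z, hzS, hzγ, hinc⟩ := key
    obtain ⟨y, hy, hyβ, q, hq1, hq2⟩ := ih
      (fun γ' hγ' => hd γ' (by simp only [Walk.support, List.mem_cons]; right; exact hγ'))
      z hzS hzγ
    refine ⟨y, hy, hyβ, .cons f.1 hinc q, by simp [Walk.edges, hq1], ?_⟩
    intro w hw
    simp only [Walk.support, List.mem_cons] at hw
    rcases hw with rfl | hw
    · exact hx
    · exact hq2 w hw

end Multigraph

namespace Multigraph
variable {V E : Type}

lemma menger_terminal [Finite V] [Finite E] (G : Multigraph V E) (u v : V) (huv : u ≠ v)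
    (hcut : ∀ S : Set V, u ∈ S → v ∉ S → 3 ≤ (G.delta S).ncard)
    (hedge : ∀ e : E, (∃ z, z ≠ u ∧ G.inc e = s(u, z)) ∨ (∃ z, z ≠ v ∧ G.inc e = s(z, v)))
    (htight : (G.delta {u}).ncard ≤ 3) :
    ∃ w₁ w₂ w₃ : G.Walk u v, EdgeDisjoint w₁ w₂ ∧ EdgeDisjoint w₁ w₃ ∧ EdgeDisjoint w₂ w₃ := by
  classical
  have hvu : v ≠ u := huv.symm
  have hvmem : v ∉ ({u} : Set V) := by simpa using hvu
  have h3 : 3 ≤ (G.delta {u}).ncard := hcut {u} rfl hvmem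
  -- the m ≤ r counting fact
  have hmr : ∀ y : V, y ≠ u → y ≠ v →
      {e' | G.inc e' = s(u, y)}.ncard ≤ {f | G.inc f = s(y, v)}.ncard := by
    intro y hyu hyv
    set UY := {e' | G.inc e' = s(u, y)} with hUY
    set YV := {f | G.inc f = s(y, v)} with hYV
    have hUYsub : UY ⊆ G.delta {u} := by
      intro e he
      exact ⟨u, y, he, rfl, by simpa using hyu⟩
    have hsub : G.delta {u, y} ⊆ ((G.delta {u}) \ UY) ∪ YV := by
      rintro e ⟨x, z, he, hx, hz⟩
      have hzu : z ≠ u := fun h => hz (by simp [h])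
      have hzy : z ≠ y := fun h => hz (by simp [h])
      rcases hx with rfl | rfl
      · refine Or.inl ⟨⟨x, z, he, rfl, by simpa using hzu⟩, ?_⟩
        intro hmem
        rw [hUY, Set.mem_setOf_eq, he, Sym2.eq_iff] at hmem
        rcases hmem with ⟨_, h⟩ | ⟨h, _⟩
        · exact hzy h
        · exact hyu h.symm
      · rcases hedge e with ⟨z', hz', hinc⟩ | ⟨z', hz', hinc⟩
        · rw [he, Sym2.eq_iff] at hinc
          rcases hinc with ⟨h1, _⟩ | ⟨_, h2⟩
          · exact absurd h1 hyu
          · exact absurd h2 hzu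
        · rw [he, Sym2.eq_iff] at hinc
          rcases hinc with ⟨h1, h2⟩ | ⟨h1, _⟩
          · exact Or.inr (by rw [hYV, Set.mem_setOf_eq, he, h2])
          · exact absurd h1 hyv
    have hvmem2 : v ∉ ({u, y} : Set V) := by
      simp only [Set.mem_insert_iff, Set.mem_singleton_iff]
      push_neg
      exact ⟨hvu, hyv.symm⟩
    have h1 : 3 ≤ (G.delta {u, y}).ncard := hcut _ (by simp) hvmem2
    have h2 : (G.delta {u, y}).ncard ≤ ((G.delta {u}) \ UY).ncard + YV.ncard :=
      le_trans (Set.ncard_le_ncard hsub (Set.toFinite _)) (Set.ncard_union_le _ _)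
    have h4 : ((G.delta {u}) \ UY).ncard = (G.delta {u}).ncard - UY.ncard :=
      Set.ncard_diff hUYsub (Set.toFinite _)
    have h5 : UY.ncard ≤ (G.delta {u}).ncard := Set.ncard_le_ncard hUYsub (Set.toFinite _)
    omega
  -- choose injections from u-y edges to y-v edges
  have hFex : ∀ y : V, y ≠ u → y ≠ v →
      ∃ F : {e' // G.inc e' = s(u, y)} → {f // G.inc f = s(y, v)}, Function.Injective F := by
    intro y hyu hyv
    haveI : Fintype {e' // G.inc e' = s(u, y)} := Fintype.ofFinite _
    haveI : Fintype {f // G.inc f = s(y, v)} := Fintype.ofFinite _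
    have hc : Fintype.card {e' // G.inc e' = s(u, y)} ≤ Fintype.card {f // G.inc f = s(y, v)} := by
      have e1 : Nat.card {e' // G.inc e' = s(u, y)} = {e' | G.inc e' = s(u, y)}.ncard :=
        Nat.card_coe_set_eq _
      have e2 : Nat.card {f // G.inc f = s(y, v)} = {f | G.inc f = s(y, v)}.ncard :=
        Nat.card_coe_set_eq _
      rw [Nat.card_eq_fintype_card] at e1 e2
      rw [e1, e2]
      exact hmr y hyu hyv
    obtain ⟨F⟩ := Function.Embedding.nonempty_of_card_le hc
    exact ⟨F, F.injective⟩
  choose F hFinj using hFex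
  -- build a walk from a crossing edge
  have wspec : ∀ (e : E) (y : V) (he : G.inc e = s(u, y)) (hyu : y ≠ u),
      ∃ w : G.Walk u v, (y = v ∧ w.edges = [e]) ∨
        (∃ hyv : y ≠ v, w.edges = [e, (F y hyu hyv ⟨e, he⟩).1]) := by
    intro e y he hyu
    by_cases hyv : y = v
    · subst hyv
      exact ⟨.cons e he (.nil _), Or.inl ⟨rfl, rfl⟩⟩
    · exact ⟨.cons e he (.cons (F y hyu hyv ⟨e, he⟩).1 (F y hyu hyv ⟨e, he⟩).2 (.nil _)),
        Or.inr ⟨hyv, rfl⟩⟩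
  obtain ⟨e₁, e₂, e₃, hd₁, hd₂, hd₃, h12, h13, h23⟩ := exists_three_distinct h3
  have hend : ∀ e ∈ G.delta ({u} : Set V), ∃ y, ∃ _ : y ≠ u, G.inc e = s(u, y) := by
    rintro e ⟨x, z, he, hx, hz⟩
    rcases hx with rfl
    exact ⟨z, fun h => hz (by simp [h]), he⟩
  obtain ⟨y₁, hy₁u, hinc₁⟩ := hend e₁ hd₁
  obtain ⟨y₂, hy₂u, hinc₂⟩ := hend e₂ hd₂
  obtain ⟨y₃, hy₃u, hinc₃⟩ := hend e₃ hd₃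
  obtain ⟨w₁, hw₁⟩ := wspec e₁ y₁ hinc₁ hy₁u
  obtain ⟨w₂, hw₂⟩ := wspec e₂ y₂ hinc₂ hy₂u
  obtain ⟨w₃, hw₃⟩ := wspec e₃ y₃ hinc₃ hy₃u
  -- generic disjointness argument
  have key : ∀ (e y : E × V), True → True := fun _ _ => id
  clear key
  have hdisj : ∀ (ea eb : E) (ya yb : V) (hea : G.inc ea = s(u, ya)) (heb : G.inc eb = s(u, yb))
      (hyau : ya ≠ u) (hybu : yb ≠ u) (wa wb : G.Walk u v),
      ea ≠ eb →
      ((ya = v ∧ wa.edges = [ea]) ∨ (∃ hyv : ya ≠ v, wa.edges = [ea, (F ya hyau hyv ⟨ea, hea⟩).1])) →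
      ((yb = v ∧ wb.edges = [eb]) ∨ (∃ hyv : yb ≠ v, wb.edges = [eb, (F yb hybu hyv ⟨eb, heb⟩).1])) →
      EdgeDisjoint wa wb := by
    intro ea eb ya yb hea heb hyau hybu wa wb hne ha hb
    have hab : ∀ (fb : {f // G.inc f = s(yb, v)}) (hybv : yb ≠ v), ea ≠ fb.1 := by
      intro fb hybv h
      have := fb.2
      rw [← h, hea, Sym2.eq_iff] at this
      rcases this with ⟨h1, _⟩ | ⟨h1, _⟩
      · exact hybu h1.symm
      · exact huv h1
    intro e hmemA hmemB
    have hfa2 : ∀ (hyav : ya ≠ v), G.inc (F ya hyau hyav ⟨ea, hea⟩).1 = s(ya, v) :=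
      fun hyav => (F ya hyau hyav ⟨ea, hea⟩).2
    rcases ha with ⟨hyav, haE⟩ | ⟨hyav, haE⟩ <;> rw [haE] at hmemA <;>
      rcases hb with ⟨hybv, hbE⟩ | ⟨hybv, hbE⟩ <;> rw [hbE] at hmemB <;>
      simp only [List.mem_cons, List.mem_singleton, List.not_mem_nil, or_false] at hmemA hmemB
    · exact hne (hmemA.symm.trans hmemB)
    · rcases hmemB with hB | hB
      · exact hne (hmemA.symm.trans hB)
      · exact hab _ hybv (hmemA.symm.trans hB)
    · rcases hmemA with hA | hA
      · exact hne (hA.symm.trans hmemB)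
      · -- fa = eb
        have h2 := hfa2 hyav
        rw [hA.symm.trans hmemB, heb, Sym2.eq_iff] at h2
        rcases h2 with ⟨h1', _⟩ | ⟨h1', _⟩
        · exact hyau h1'.symm
        · exact huv h1' 
    · rcases hmemA with hA | hA <;> rcases hmemB with hB | hB
      · exact hne (hA.symm.trans hB)
      · exact hab _ hybv (hA.symm.trans hB)
      · have h2 := hfa2 hyav
        rw [hA.symm.trans hB, heb, Sym2.eq_iff] at h2
        rcases h2 with ⟨h1', _⟩ | ⟨h1', _⟩
        · exact hyau h1'.symm
        · exact huv h1' 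
      · by_cases hyy : ya = yb
        · subst hyy
          have heq : (F ya hyau hyav ⟨ea, hea⟩) = (F ya hybu hybv ⟨eb, heb⟩) :=
            Subtype.ext (hA.symm.trans hB)
          have : (⟨ea, hea⟩ : {e' // G.inc e' = s(u, ya)}) = ⟨eb, heb⟩ := hFinj _ _ _ heq
          exact hne (congrArg Subtype.val this)
        · have h2 := hfa2 hyav
          have h3' := (F yb hybu hybv ⟨eb, heb⟩).2
          rw [hA.symm.trans hB, h3', Sym2.eq_iff] at h2
          rcases h2 with ⟨h1', _⟩ | ⟨h1', _⟩
          · exact hyy h1'.symm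
          · exact hybv h1'
  exact ⟨w₁, w₂, w₃,
    hdisj e₁ e₂ y₁ y₂ hinc₁ hinc₂ hy₁u hy₂u w₁ w₂ h12 hw₁ hw₂,
    hdisj e₁ e₃ y₁ y₃ hinc₁ hinc₃ hy₁u hy₃u w₁ w₃ h13 hw₁ hw₃,
    hdisj e₂ e₃ y₂ y₃ hinc₂ hinc₃ hy₂u hy₃u w₂ w₃ h23 hw₂ hw₃⟩

end Multigraph

namespace Multigraph
variable {V E : Type} {G : Multigraph V E}

namespace Walk
def copy {u u' v v' : V} (p : G.Walk u v) (hu : u = u') (hv : v = v') : G.Walk u' v' :=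
  hu ▸ hv ▸ p

@[simp] lemma edges_copy {u u' v v' : V} (p : G.Walk u v) (hu : u = u') (hv : v = v') :
    (p.copy hu hv).edges = p.edges := by subst hu; subst hv; rfl

@[simp] lemma support_copy {u u' v v' : V} (p : G.Walk u v) (hu : u = u') (hv : v = v') :
    (p.copy hu hv).support = p.support := by subst hu; subst hv; rfl
end Walk

lemma mem_inc_left {e : E} {a b : V} (h : G.inc e = s(a, b)) : a ∈ G.inc e := by
  rw [h]; exact Sym2.mem_mk_left a b

lemma mem_inc_right {e : E} {a b : V} (h : G.inc e = s(a, b)) : b ∈ G.inc e := by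
  rw [h]; exact Sym2.mem_mk_right a b

lemma exists_rep_sym2 (z : Sym2 V) : ∃ a b, z = s(a, b) := by
  induction z using Sym2.ind with
  | _ a b => exact ⟨a, b, rfl⟩

lemma Walk.exists_eq_cons {a b : V} (h : a ≠ b) (p : G.Walk a b) :
    ∃ (m : V) (e : E) (he : G.inc e = s(a, m)) (d : G.Walk m b), p = .cons e he d := by
  cases p with
  | nil => exact absurd rfl h
  | cons e he d => exact ⟨_, e, he, d, rfl⟩

/-- Process a walk of the quotient collapsing `Sᶜ`: extract a boundary edge and a
lifted walk on the `S`-side ending at `u`. -/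
lemma process_side2 (S : Set V) {u v : V} (huS : u ∈ S) (hvS : v ∉ S)
    (W : (G.quot (collapse S)).Walk (Quotient.mk _ u) (Quotient.mk _ v)) :
    ∃ (x c : V) (f : E) (L : G.Walk x u), x ∈ S ∧ c ∉ S ∧ G.inc f = s(x, c) ∧
      (∀ z ∈ L.support, z ∈ S) ∧ (∃ f' ∈ W.edges, f'.1 = f) ∧
      (∀ e ∈ L.edges, ∃ e' ∈ W.edges, e'.1 = e) := by
  classical
  obtain ⟨q, hq1, _, hq3⟩ := W.reverse.exists_suffix (Quotient.mk _ v) (Walk.start_mem_support _)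
  have hquv : Quotient.mk (collapse S) v ≠ Quotient.mk (collapse S) u := by
    intro hcon
    rcases collapse_mk_eq.mp hcon with rfl | h
    · exact hvS huS
    · exact h.2 huS
  obtain ⟨γ, g, hg, d, rfl⟩ := Walk.exists_eq_cons hquv q
  · have hdsup : Quotient.mk (collapse S) v ∉ d.support := by
      intro hcon
      exact hq3 (by simpa [Walk.support] using hcon)
    have hd : ∀ γ' ∈ d.support, ∀ w : V, w ∉ S → γ' ≠ Quotient.mk (collapse S) w := by
      intro γ' hγ' w hw hcon
      apply hdsup
      have : Quotient.mk (collapse S) w = Quotient.mk (collapse S) v :=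
        collapse_mk_eq.mpr (Or.inr ⟨hw, hvS⟩)
      rwa [hcon, this] at hγ'
    -- decode the boundary edge g
    obtain ⟨p₀, q₀, hpq⟩ := exists_rep_sym2 (G.inc g.1)
    have hg' : Sym2.map (Quotient.mk (collapse S)) (G.inc g.1) = s(Quotient.mk _ v, γ) := hg
    rw [hpq, Sym2.map_pair_eq, Sym2.eq_iff] at hg'
    have hγd : γ ∈ d.support := d.start_mem_support
    have key : ∃ (x c : V), x ∈ S ∧ c ∉ S ∧ G.inc g.1 = s(x, c) ∧
        Quotient.mk (collapse S) x = γ := by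
      rcases hg' with ⟨h1, h2⟩ | ⟨h1, h2⟩
      · -- p₀ ~ v, q₀ ~ γ
        have hp₀ : p₀ ∉ S := by
          rcases collapse_mk_eq.mp h1 with rfl | h
          · exact hvS
          · exact h.1
        have hq₀ : q₀ ∈ S := by
          by_contra hq₀
          exact hd γ hγd q₀ hq₀ h2.symm
        exact ⟨q₀, p₀, hq₀, hp₀, by rw [hpq, Sym2.eq_swap], h2⟩
      · have hq₀ : q₀ ∉ S := by
          rcases collapse_mk_eq.mp h2 with rfl | h
          · exact hvS
          · exact h.1
        have hp₀ : p₀ ∈ S := by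
          by_contra hp₀
          exact hd γ hγd p₀ hp₀ h1.symm
        exact ⟨p₀, q₀, hp₀, hq₀, hpq, h1⟩
    obtain ⟨x, c, hx, hc, hincg, hxγ⟩ := key
    obtain ⟨y, hy, hyu, L, hL1, hL2⟩ := quot_walk_lift S d hd x hx hxγ
    have : y = u := by
      rcases collapse_mk_eq.mp hyu with h | h
      · exact h
      · exact absurd hy h.1
    subst this
    refine ⟨x, c, g.1, L, hx, hc, hincg, hL2, ⟨g, ?_, rfl⟩, ?_⟩
    · rw [← Walk.mem_edges_reverse]
      exact hq1 g (by simp [Walk.edges])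
    · intro e he
      rw [hL1, List.mem_map] at he
      obtain ⟨e', he', rfl⟩ := he
      refine ⟨e', ?_, rfl⟩
      rw [← Walk.mem_edges_reverse]
      exact hq1 e' (by simp [Walk.edges, he'])

/-- Process a walk of the quotient collapsing `S`: extract a boundary edge and a
lifted walk on the `Sᶜ`-side ending at `v`. -/
lemma process_side1 (S : Set V) {u v : V} (huS : u ∈ S) (hvS : v ∉ S)
    (Q : (G.quot (collapse Sᶜ)).Walk (Quotient.mk _ u) (Quotient.mk _ v)) :
    ∃ (x c : V) (g : E) (L : G.Walk c v), x ∈ S ∧ c ∉ S ∧ G.inc g = s(x, c) ∧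
      (∀ z ∈ L.support, z ∉ S) ∧ (∃ g' ∈ Q.edges, g'.1 = g) ∧
      (∀ e ∈ L.edges, ∃ e' ∈ Q.edges, e'.1 = e) := by
  classical
  obtain ⟨q, hq1, _, hq3⟩ := Q.exists_suffix (Quotient.mk _ u) (Walk.start_mem_support _)
  have hquv : Quotient.mk (collapse Sᶜ) u ≠ Quotient.mk (collapse Sᶜ) v := by
    intro hcon
    rcases collapse_mk_eq.mp hcon with rfl | h
    · exact hvS huS
    · exact h.2 (by simpa using hvS)
  obtain ⟨γ, g, hg, d, rfl⟩ := Walk.exists_eq_cons hquv q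
  · have hdsup : Quotient.mk (collapse Sᶜ) u ∉ d.support := by
      intro hcon
      exact hq3 (by simpa [Walk.support] using hcon)
    have hd : ∀ γ' ∈ d.support, ∀ w : V, w ∉ Sᶜ → γ' ≠ Quotient.mk (collapse Sᶜ) w := by
      intro γ' hγ' w hw hcon
      apply hdsup
      have : Quotient.mk (collapse Sᶜ) w = Quotient.mk (collapse Sᶜ) u :=
        collapse_mk_eq.mpr (Or.inr ⟨hw, by simpa using huS⟩)
      rwa [hcon, this] at hγ'
    obtain ⟨p₀, q₀, hpq⟩ := exists_rep_sym2 (G.inc g.1)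
    have hg' : Sym2.map (Quotient.mk (collapse Sᶜ)) (G.inc g.1) = s(Quotient.mk _ u, γ) := hg
    rw [hpq, Sym2.map_pair_eq, Sym2.eq_iff] at hg'
    have hγd : γ ∈ d.support := d.start_mem_support
    have key : ∃ (x c : V), x ∈ S ∧ c ∉ S ∧ G.inc g.1 = s(x, c) ∧
        Quotient.mk (collapse Sᶜ) c = γ := by
      rcases hg' with ⟨h1, h2⟩ | ⟨h1, h2⟩
      · have hp₀ : p₀ ∈ S := by
          rcases collapse_mk_eq.mp h1 with rfl | h
          · exact huS
          · simpa using h.1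
        have hq₀ : q₀ ∉ S := by
          intro hq₀
          exact hd γ hγd q₀ (by simpa using hq₀) h2.symm
        exact ⟨p₀, q₀, hp₀, hq₀, hpq, h2⟩
      · have hq₀ : q₀ ∈ S := by
          rcases collapse_mk_eq.mp h2 with rfl | h
          · exact huS
          · simpa using h.1
        have hp₀ : p₀ ∉ S := by
          intro hp₀
          exact hd γ hγd p₀ (by simpa using hp₀) h1.symm
        exact ⟨q₀, p₀, hq₀, hp₀, by rw [hpq, Sym2.eq_swap], h1⟩
    obtain ⟨x, c, hx, hc, hincg, hcγ⟩ := key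
    obtain ⟨y, hy, hyv, L, hL1, hL2⟩ := quot_walk_lift Sᶜ d hd c (by simpa using hc) hcγ
    have : y = v := by
      rcases collapse_mk_eq.mp hyv with h | h
      · exact h
      · exact absurd hy h.1
    subst this
    refine ⟨x, c, g.1, L, hx, hc, hincg, fun z hz => by simpa using hL2 z hz, ⟨g, ?_, rfl⟩, ?_⟩
    · exact hq1 g (by simp [Walk.edges])
    · intro e he
      rw [hL1, List.mem_map] at he
      obtain ⟨e', he', rfl⟩ := he
      exact ⟨e', hq1 e' (by simp [Walk.edges, he']), rfl⟩

end Multigraph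

namespace Multigraph
variable {V E : Type}

lemma menger_glue [Finite V] [Finite E] (G : Multigraph V E) (u v : V)
    (S : Set V) (huS : u ∈ S) (hvS : v ∉ S) (htight : (G.delta S).ncard = 3)
    (W : Fin 3 → (G.quot (collapse S)).Walk (Quotient.mk _ u) (Quotient.mk _ v))
    (hW : ∀ i j, i ≠ j → EdgeDisjoint (W i) (W j))
    (Q : Fin 3 → (G.quot (collapse Sᶜ)).Walk (Quotient.mk _ u) (Quotient.mk _ v))
    (hQ : ∀ i j, i ≠ j → EdgeDisjoint (Q i) (Q j)) :
    ∃ w : Fin 3 → G.Walk u v, ∀ i j, i ≠ j → EdgeDisjoint (w i) (w j) := by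
  classical
  have h2 : ∀ i, ∃ (x c : V) (f : E) (L : G.Walk x u), x ∈ S ∧ c ∉ S ∧ G.inc f = s(x, c) ∧
      (∀ z ∈ L.support, z ∈ S) ∧ (∃ f' ∈ (W i).edges, f'.1 = f) ∧
      (∀ e ∈ L.edges, ∃ e' ∈ (W i).edges, e'.1 = e) :=
    fun i => process_side2 S huS hvS (W i)
  choose x c f L hx hc hf hLsup hfmem hLmem using h2
  have h1 : ∀ j, ∃ (x' c' : V) (g : E) (L' : G.Walk c' v), x' ∈ S ∧ c' ∉ S ∧
      G.inc g = s(x', c') ∧ (∀ z ∈ L'.support, z ∉ S) ∧ (∃ g' ∈ (Q j).edges, g'.1 = g) ∧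
      (∀ e ∈ L'.edges, ∃ e' ∈ (Q j).edges, e'.1 = e) :=
    fun j => process_side1 S huS hvS (Q j)
  choose x' c' g L' hx' hc' hg hL'sup hgmem hL'mem using h1
  -- distinctness of boundary edges
  have hfinj : ∀ i j, i ≠ j → f i ≠ f j := by
    intro i j hij hcon
    obtain ⟨f₁, hm₁, hv₁⟩ := hfmem i
    obtain ⟨f₂, hm₂, hv₂⟩ := hfmem j
    have : f₁ = f₂ := Subtype.ext (hv₁.trans (hcon.trans hv₂.symm))
    exact hW i j hij f₁ hm₁ (this ▸ hm₂)
  have hginj : ∀ i j, i ≠ j → g i ≠ g j := by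
    intro i j hij hcon
    obtain ⟨g₁, hm₁, hv₁⟩ := hgmem i
    obtain ⟨g₂, hm₂, hv₂⟩ := hgmem j
    have : g₁ = g₂ := Subtype.ext (hv₁.trans (hcon.trans hv₂.symm))
    exact hQ i j hij g₁ hm₁ (this ▸ hm₂)
  have hfdelta : ∀ i, f i ∈ G.delta S := fun i => ⟨x i, c i, hf i, hx i, hc i⟩
  have hgdelta : ∀ j, g j ∈ G.delta S := fun j => ⟨x' j, c' j, hg j, hx' j, hc' j⟩
  -- the g's exhaust the cut
  have hgset : ({g 0, g 1, g 2} : Set E) = G.delta S := by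
    refine Set.eq_of_subset_of_ncard_le ?_ ?_ (Set.toFinite _)
    · rintro e (rfl | rfl | rfl) <;> exact hgdelta _
    · rw [htight]
      have : ({g 0, g 1, g 2} : Set E).ncard = 3 := Set.ncard_eq_three.mpr
        ⟨g 0, g 1, g 2, hginj 0 1 (by decide), hginj 0 2 (by decide),
          hginj 1 2 (by decide), rfl⟩
      omega
  have hmatch : ∀ i, ∃ j, g j = f i := by
    intro i
    have : f i ∈ ({g 0, g 1, g 2} : Set E) := hgset ▸ hfdelta i
    rcases this with h | h | h
    · exact ⟨0, h.symm⟩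
    · exact ⟨1, h.symm⟩
    · exact ⟨2, h.symm⟩
  choose σ hσ using hmatch
  have hσinj : ∀ i j, i ≠ j → σ i ≠ σ j := by
    intro i j hij hcon
    exact hfinj i j hij (by rw [← hσ i, ← hσ j, hcon])
  -- endpoints match
  have hcc : ∀ i, c' (σ i) = c i := by
    intro i
    have h := hg (σ i)
    rw [hσ i, hf i, Sym2.eq_iff] at h
    rcases h with ⟨_, h2⟩ | ⟨h1, _⟩
    · exact h2.symm
    · exact absurd (h1 ▸ hx i) (hc' (σ i))
  refine ⟨fun i => ((L i).reverse.append
    (.cons (f i) (hf i) ((L' (σ i)).copy (hcc i) rfl))), ?_⟩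
  intro i j hij e he1 he2
  have hchar : ∀ k e', e' ∈ (((L k).reverse.append
      (.cons (f k) (hf k) ((L' (σ k)).copy (hcc k) rfl))).edges : List E) ↔
      (e' ∈ (L k).edges ∨ e' = f k ∨ e' ∈ (L' (σ k)).edges) := by
    intro k e'
    rw [Walk.edges_append]
    simp only [List.mem_append, Walk.edges, List.mem_cons, Walk.edges_copy,
      Walk.mem_edges_reverse]
  rw [hchar] at he1 he2
  -- basic separation facts
  have sepLL' : ∀ k k' e', e' ∈ (L k).edges → e' ∈ (L' k').edges → False := by
    intro k k' e' hA hB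
    obtain ⟨a, b, hab⟩ := exists_rep_sym2 (G.inc e')
    have h1 := Walk.mem_support_of_mem_edges hA (mem_inc_left hab)
    have h2 := Walk.mem_support_of_mem_edges hB (mem_inc_left hab)
    exact hL'sup k' a h2 (hLsup k a h1)
  have sepLf : ∀ k k' e', e' ∈ (L k).edges → e' = f k' → False := by
    intro k k' e' hA hB
    have h1 := Walk.mem_support_of_mem_edges hA (mem_inc_right (hB ▸ hf k'))
    exact hc k' (hLsup k _ h1)
  have sepL'f : ∀ k k' e', e' ∈ (L' k).edges → e' = f k' → False := by
    intro k k' e' hA hB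
    have h1 := Walk.mem_support_of_mem_edges hA (mem_inc_left (hB ▸ hf k'))
    exact hL'sup k _ h1 (hx k')
  have sepLL : ∀ k k', k ≠ k' → ∀ e', e' ∈ (L k).edges → e' ∈ (L k').edges → False := by
    intro k k' hkk e' hA hB
    obtain ⟨e₁, hm₁, hv₁⟩ := hLmem k e' hA
    obtain ⟨e₂, hm₂, hv₂⟩ := hLmem k' e' hB
    have : e₁ = e₂ := Subtype.ext (hv₁.trans hv₂.symm)
    exact hW k k' hkk e₁ hm₁ (this ▸ hm₂)
  have sepL'L' : ∀ k k', k ≠ k' → ∀ e', e' ∈ (L' (σ k)).edges → e' ∈ (L' (σ k')).edges →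
      False := by
    intro k k' hkk e' hA hB
    obtain ⟨e₁, hm₁, hv₁⟩ := hL'mem (σ k) e' hA
    obtain ⟨e₂, hm₂, hv₂⟩ := hL'mem (σ k') e' hB
    have : e₁ = e₂ := Subtype.ext (hv₁.trans hv₂.symm)
    exact hQ (σ k) (σ k') (hσinj k k' hkk) e₁ hm₁ (this ▸ hm₂)
  rcases he1 with hA | hA | hA <;> rcases he2 with hB | hB | hB
  · exact sepLL i j hij e hA hB
  · exact sepLf i j e hA hB
  · exact sepLL' i (σ j) e hA hB
  · exact sepLf j i e hB hA
  · exact hfinj i j hij (hA.symm.trans hB)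
  · exact sepL'f (σ j) i e hB hA
  · exact sepLL' j (σ i) e hB hA
  · exact sepL'f (σ i) j e hA hB
  · exact sepL'L' i j hij e hA hB

end Multigraph

namespace Multigraph
variable {V E : Type}

lemma EdgeDisjoint.symm' {G : Multigraph V E} {u v u' v' : V} {p : G.Walk u v}
    {q : G.Walk u' v'} (h : EdgeDisjoint p q) : EdgeDisjoint q p :=
  fun e h1 h2 => h e h2 h1

lemma pack3 {G : Multigraph V E} {u v : V} (a b c : G.Walk u v)
    (d1 : EdgeDisjoint a b) (d2 : EdgeDisjoint a c) (d3 : EdgeDisjoint b c) :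
    ∃ w : Fin 3 → G.Walk u v, ∀ i j, i ≠ j → EdgeDisjoint (w i) (w j) := by
  refine ⟨fun i => if i = 0 then a else if i = 1 then b else c, ?_⟩
  intro i j hij
  fin_cases i <;> fin_cases j <;> simp_all <;>
    first
      | exact d1 | exact d2 | exact d3
      | exact d1.symm' | exact d2.symm' | exact d3.symm'

theorem menger_aux : ∀ (n : ℕ) (V E : Type) [Finite V] [Finite E] (G : Multigraph V E)
    (u v : V), u ≠ v → Nat.card V + Nat.card E ≤ n →
    (∀ S : Set V, u ∈ S → v ∉ S → 3 ≤ (G.delta S).ncard) →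
    ∃ w : Fin 3 → G.Walk u v, ∀ i j, i ≠ j → EdgeDisjoint (w i) (w j) := by
  intro n
  induction n with
  | zero =>
    intro V E _ _ G u v huv hcard hcut
    haveI : Nonempty V := ⟨u⟩
    have : 0 < Nat.card V := Nat.card_pos
    omega
  | succ n ih =>
    intro V E _ _ G u v huv hcard hcut
    classical
    by_cases hglue : ∃ S : Set V, u ∈ S ∧ v ∉ S ∧ (G.delta S).ncard ≤ 3 ∧ S ≠ {u} ∧ Sᶜ ≠ {v}
    · obtain ⟨S, huS, hvS, h3, hSne, hScne⟩ := hglue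
      have htight : (G.delta S).ncard = 3 := le_antisymm h3 (hcut S huS hvS)
      obtain ⟨w₂, hw₂S, hw₂u⟩ : ∃ w, w ∈ S ∧ w ≠ u := by
        by_contra hcon
        push_neg at hcon
        exact hSne (Set.eq_singleton_iff_unique_mem.mpr ⟨huS, hcon⟩)
      obtain ⟨w₁, hw₁S, hw₁v⟩ : ∃ w, w ∉ S ∧ w ≠ v := by
        by_contra hcon
        push_neg at hcon
        exact hScne (Set.eq_singleton_iff_unique_mem.mpr ⟨hvS, fun w hw => hcon w hw⟩)
      -- side 2 : collapse Sᶜ to a point (quotient by `collapse S`)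
      have hV2 : Nat.card (Quotient (collapse S)) < Nat.card V :=
        card_quotient_lt _ hw₁v (Quotient.sound (Or.inr ⟨hw₁S, hvS⟩))
      have hE2 : Nat.card {e : E // ¬(Sym2.map (Quotient.mk (collapse S)) (G.inc e)).IsDiag}
          ≤ Nat.card E := Nat.card_le_card_of_injective _ Subtype.coe_injective
      have hne2 : Quotient.mk (collapse S) u ≠ Quotient.mk (collapse S) v := by
        intro h
        rcases collapse_mk_eq.mp h with rfl | h
        · exact hvS huS
        · exact h.1 huS
      have hcut2 : ∀ X, Quotient.mk (collapse S) u ∈ X → Quotient.mk (collapse S) v ∉ X →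
          3 ≤ ((G.quot (collapse S)).delta X).ncard := by
        intro X hXu hXv
        exact le_trans (hcut (Quotient.mk (collapse S) ⁻¹' X) hXu hXv)
          (ncard_delta_preimage_le _ X)
      obtain ⟨W, hW⟩ := ih _ _ (G.quot (collapse S)) _ _ hne2 (by omega) hcut2
      -- side 1 : collapse S to a point
      have hV1 : Nat.card (Quotient (collapse Sᶜ)) < Nat.card V :=
        card_quotient_lt _ hw₂u (Quotient.sound (Or.inr ⟨by simpa using hw₂S, by simpa using huS⟩))
      have hne1 : Quotient.mk (collapse Sᶜ) u ≠ Quotient.mk (collapse Sᶜ) v := by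
        intro h
        rcases collapse_mk_eq.mp h with rfl | h
        · exact hvS huS
        · exact h.2 (by simpa using hvS)
      have hcut1 : ∀ X, Quotient.mk (collapse Sᶜ) u ∈ X → Quotient.mk (collapse Sᶜ) v ∉ X →
          3 ≤ ((G.quot (collapse Sᶜ)).delta X).ncard := by
        intro X hXu hXv
        exact le_trans (hcut (Quotient.mk (collapse Sᶜ) ⁻¹' X) hXu hXv)
          (ncard_delta_preimage_le _ X)
      have hE1 : Nat.card {e : E // ¬(Sym2.map (Quotient.mk (collapse Sᶜ)) (G.inc e)).IsDiag}
          ≤ Nat.card E := Nat.card_le_card_of_injective _ Subtype.coe_injective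
      obtain ⟨Q, hQ⟩ := ih _ _ (G.quot (collapse Sᶜ)) _ _ hne1 (by omega) hcut1
      exact menger_glue G u v S huS hvS htight W hW Q hQ
    · by_cases hdel : ∃ e₀ : E, ∀ S : Set V, u ∈ S → v ∉ S →
          3 ≤ ((⟨fun e' => G.inc e'.1⟩ : Multigraph V {e : E // e ≠ e₀}).delta S).ncard
      · obtain ⟨e₀, hd⟩ := hdel
        haveI : Fintype E := Fintype.ofFinite E
        have hE : Nat.card {e : E // e ≠ e₀} < Nat.card E := by
          rw [Nat.card_eq_fintype_card, Nat.card_eq_fintype_card]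
          exact Fintype.card_subtype_lt (x := e₀) (by simp)
        obtain ⟨w, hw⟩ := ih _ _ (⟨fun e' => G.inc e'.1⟩ : Multigraph V {e : E // e ≠ e₀})
          u v huv (by omega) hd
        refine ⟨fun i => (w i).transfer Subtype.val (fun e => rfl), ?_⟩
        intro i j hij e he1 he2
        rw [Walk.edges_transfer, List.mem_map] at he1 he2
        obtain ⟨e₁, hm₁, rfl⟩ := he1
        obtain ⟨e₂, hm₂, he⟩ := he2
        have : e₂ = e₁ := Subtype.ext he
        exact hw i j hij e₁ hm₁ (this ▸ hm₂)
      · -- terminal case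
        push_neg at hdel
        have htriv : ∀ S : Set V, u ∈ S → v ∉ S → (G.delta S).ncard ≤ 3 →
            S = {u} ∨ Sᶜ = {v} := by
          intro S h1 h2 h3
          by_contra hcon
          push_neg at hcon
          exact hglue ⟨S, h1, h2, h3, hcon.1, hcon.2⟩
        have hed : ∀ e₀ : E, ∃ S : Set V, u ∈ S ∧ v ∉ S ∧ e₀ ∈ G.delta S ∧
            (G.delta S).ncard ≤ 3 := by
          intro e₀
          obtain ⟨S, h1, h2, hlt⟩ := hdel e₀
          set D := (⟨fun e' => G.inc e'.1⟩ : Multigraph V {e : E // e ≠ e₀}) with hD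
          have hlt' : (D.delta S).ncard ≤ 2 := by omega
          have himg : ∀ e ∈ G.delta S, e ≠ e₀ → e ∈ Subtype.val '' (D.delta S) := by
            rintro e ⟨a, b, he, ha, hb⟩ hee
            exact ⟨⟨e, hee⟩, ⟨a, b, he, ha, hb⟩, rfl⟩
          have he₀ : e₀ ∈ G.delta S := by
            by_contra hcon
            have hsub : G.delta S ⊆ Subtype.val '' (D.delta S) := by
              intro e he
              exact himg e he (fun h => hcon (h ▸ he))
            have := hcut S h1 h2
            have h5 : (G.delta S).ncard ≤ (Subtype.val '' (D.delta S)).ncard :=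
              Set.ncard_le_ncard hsub (Set.toFinite _)
            have h6 : (Subtype.val '' (D.delta S)).ncard ≤ (D.delta S).ncard :=
              Set.ncard_image_le (Set.toFinite _)
            omega
          have hsub : G.delta S ⊆ (Subtype.val '' (D.delta S)) ∪ {e₀} := by
            intro e he
            by_cases hee : e = e₀
            · exact Or.inr (by simp [hee])
            · exact Or.inl (himg e he hee)
          have h5 : (G.delta S).ncard ≤ (Subtype.val '' (D.delta S)).ncard + 1 := by
            refine le_trans (Set.ncard_le_ncard hsub (Set.toFinite _)) ?_
            refine le_trans (Set.ncard_union_le _ _) ?_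
            simp
          have h6 : (Subtype.val '' (D.delta S)).ncard ≤ (D.delta S).ncard :=
            Set.ncard_image_le (Set.toFinite _)
          exact ⟨S, h1, h2, he₀, by omega⟩
        have hEne : Nonempty E := by
          by_contra hcon
          haveI := not_nonempty_iff.mp hcon
          have h := hcut {u} rfl (by simpa using huv.symm)
          have : G.delta ({u} : Set V) = ∅ := Set.eq_empty_of_isEmpty _
          rw [this, Set.ncard_empty] at h
          omega
        have hedge : ∀ e : E, (∃ z, z ≠ u ∧ G.inc e = s(u, z)) ∨
            (∃ z, z ≠ v ∧ G.inc e = s(z, v)) := by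
          intro e
          obtain ⟨S, h1, h2, heS, h3⟩ := hed e
          rcases htriv S h1 h2 h3 with hS | hS
          · rw [hS] at heS
            obtain ⟨a, b, he, ha, hb⟩ := heS
            rcases ha with rfl
            exact Or.inl ⟨b, fun h => hb (by simp [h]), he⟩
          · have hS' : S = {v}ᶜ := by rw [← hS, compl_compl]
            rw [hS', delta_compl] at heS
            obtain ⟨a, b, he, ha, hb⟩ := heS
            rcases ha with rfl
            exact Or.inr ⟨b, fun h => hb (by simp [h]), by rw [he, Sym2.eq_swap]⟩
        obtain ⟨e₀⟩ := hEne
        obtain ⟨S₀, h1, h2, he₀, h3⟩ := hed e₀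
        rcases htriv S₀ h1 h2 h3 with hS | hS
        · have htight : (G.delta ({u} : Set V)).ncard ≤ 3 := hS ▸ h3
          obtain ⟨a, b, c, d1, d2, d3⟩ := menger_terminal G u v huv hcut hedge htight
          exact pack3 a b c d1 d2 d3
        · have hcut' : ∀ S : Set V, v ∈ S → u ∉ S → 3 ≤ (G.delta S).ncard := by
            intro S hv hu
            have := hcut Sᶜ (by simpa using hu) (by simpa using hv)
            rwa [delta_compl] at this
          have hedge' : ∀ e : E, (∃ z, z ≠ v ∧ G.inc e = s(v, z)) ∨
              (∃ z, z ≠ u ∧ G.inc e = s(z, u)) := by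
            intro e
            rcases hedge e with ⟨z, hz, hinc⟩ | ⟨z, hz, hinc⟩
            · exact Or.inr ⟨z, hz, by rw [hinc, Sym2.eq_swap]⟩
            · exact Or.inl ⟨z, hz, by rw [hinc, Sym2.eq_swap]⟩
          have htight' : (G.delta ({v} : Set V)).ncard ≤ 3 := by
            have h4 : S₀ = {v}ᶜ := by rw [← hS, compl_compl]
            rw [← delta_compl ({v} : Set V), ← h4]
            exact h3
          obtain ⟨a, b, c, d1, d2, d3⟩ := menger_terminal G v u huv.symm hcut' hedge' htight'
          refine pack3 a.reverse b.reverse c.reverse ?_ ?_ ?_ <;>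
            intro e hm1 hm2 <;> rw [Walk.mem_edges_reverse] at hm1 hm2
          · exact d1 e hm1 hm2
          · exact d2 e hm1 hm2
          · exact d3 e hm1 hm2

/-- Edge version of Menger's theorem for three paths. -/
theorem menger [Finite V] [Finite E] (G : Multigraph V E) (u v : V) (huv : u ≠ v)
    (hcut : ∀ S : Set V, u ∈ S → v ∉ S → 3 ≤ (G.delta S).ncard) : ThreePaths G u v := by
  obtain ⟨w, hw⟩ := menger_aux (Nat.card V + Nat.card E) V E G u v huv le_rfl hcut
  obtain ⟨p₁, hp₁, hs₁, _⟩ := (w 0).exists_path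
  obtain ⟨p₂, hp₂, hs₂, _⟩ := (w 1).exists_path
  obtain ⟨p₃, hp₃, hs₃, _⟩ := (w 2).exists_path
  refine ⟨p₁, p₂, p₃, hp₁, hp₂, hp₃, ?_, ?_, ?_⟩ <;> intro e h1 h2
  · exact hw 0 1 (by decide) e (hs₁ e h1) (hs₂ e h2)
  · exact hw 0 2 (by decide) e (hs₁ e h1) (hs₃ e h2)
  · exact hw 1 2 (by decide) e (hs₂ e h1) (hs₃ e h2)

end Multigraph

namespace Multigraph
variable {V E : Type} {G : Multigraph V E}

lemma Walk.exists_endpoint_dropLast {u v : V} (Q : G.Walk u v) :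
    ∀ f ∈ Q.edges, ∃ x, x ∈ G.inc f ∧ x ∈ Q.support.dropLast := by
  induction Q with
  | nil => simp [Walk.edges]
  | cons f' hf' Q' ih =>
    intro f hf
    rename_i a m b
    have hne := Q'.support_ne_nil
    simp only [Walk.edges, List.mem_cons] at hf
    simp only [Walk.support, List.dropLast_cons_of_ne_nil hne]
    rcases hf with rfl | hf
    · exact ⟨a, mem_inc_left hf', by simp⟩
    · obtain ⟨x, hx1, hx2⟩ := ih f hf
      exact ⟨x, hx1, by simp [hx2]⟩

lemma threeEC_of_cut [Finite V] [Finite E] {u v : V}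
    (h : ∀ S : Set V, u ∈ S → v ∉ S → 3 ≤ (G.delta S).ncard) : ThreeEC G u v := by
  by_cases huv : u = v
  · exact Or.inl huv
  · exact Or.inr (menger G u v huv h)

lemma ThreeEC.symm [Finite V] [Finite E] {u v : V} (h : ThreeEC G u v) : ThreeEC G v u := by
  refine threeEC_of_cut fun S hv hu => ?_
  have := cut_of_threeEC h Sᶜ (by simpa using hu) (by simpa using hv)
  rwa [delta_compl] at this

lemma ThreeEC.trans [Finite V] [Finite E] {u v w : V} (h1 : ThreeEC G u v)
    (h2 : ThreeEC G v w) : ThreeEC G u w := by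
  refine threeEC_of_cut fun S hu hw => ?_
  by_cases hv : v ∈ S
  · exact cut_of_threeEC h2 S hv hw
  · exact cut_of_threeEC h1 S hu hv

lemma compRel_equivalence (A : Set V) : Equivalence (G.compRel A) := by
  constructor
  · intro x
    exact ⟨.nil x.1, by simpa [Walk.support] using x.2⟩
  · rintro x y ⟨p, hp⟩
    exact ⟨p.reverse, fun w hw => hp w (Walk.mem_support_reverse.mp hw)⟩
  · rintro x y z ⟨p, hp⟩ ⟨q, hq⟩
    refine ⟨p.append q, fun w hw => ?_⟩
    rcases Walk.mem_support_append_iff p q |>.mp hw with h | h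
    · exact hp w h
    · exact hq w h

lemma compSetoid_rel_iff {A : Set V} {a b : {v : V // v ∉ A}} :
    (G.compSetoid A).r a b ↔ G.compRel A a b :=
  Equivalence.eqvGen_iff (compRel_equivalence A)

lemma compSetoid_mk_eq {A : Set V} {a b : {v : V // v ∉ A}} :
    Quotient.mk (G.compSetoid A) a = Quotient.mk (G.compSetoid A) b ↔ G.compRel A a b := by
  rw [Quotient.eq]
  exact compSetoid_rel_iff

/-- The set of vertices in the connected component of `G - A` containing `z₀`. -/
def compSet (G : Multigraph V E) (A : Set V) (z₀ : {w : V // w ∉ A}) : Set V :=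
  {w : V | ∃ h : w ∉ A, G.compRel A ⟨w, h⟩ z₀}

lemma compSet_notMem_A {A : Set V} {z₀ : {w : V // w ∉ A}} {w : V}
    (h : w ∈ G.compSet A z₀) : w ∉ A := h.1

/-- Key structural lemma: at most two edges leave a component of `G - A`,
when `A` is a 3-edge-connected class. -/
lemma comp_delta_le_two [Finite V] [Finite E] (G : Multigraph V E) (A : Set V)
    (hclosed : ∀ a ∈ A, ∀ b, ThreeEC G a b → b ∈ A)
    (hpair : ∀ a ∈ A, ∀ b ∈ A, ThreeEC G a b)
    (z₀ : {w : V // w ∉ A}) :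
    (G.delta (G.compSet A z₀)).ncard ≤ 2 := by
  classical
  by_contra hcon
  push_neg at hcon
  have h3 : 3 ≤ (G.delta (G.compSet A z₀)).ncard := hcon
  obtain ⟨e₁, e₂, e₃, hd₁, hd₂, hd₃, h12, h13, h23⟩ := exists_three_distinct h3
  clear hcon h3
  -- unpack the edges, showing the outer endpoint is in A
  have unpack : ∀ e ∈ G.delta (G.compSet A z₀), ∃ (p q : V) (hp : p ∉ A),
      G.inc e = s(p, q) ∧ G.compRel A ⟨p, hp⟩ z₀ ∧ q ∈ A := by
    rintro e ⟨p, q, he, hp, hq⟩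
    obtain ⟨hpA, hprel⟩ := hp
    refine ⟨p, q, hpA, he, hprel, ?_⟩
    by_contra hqA
    refine hq ⟨hqA, ?_⟩
    refine (compRel_equivalence A).trans ((compRel_equivalence A).symm
      (⟨.cons e he (.nil q), ?_⟩ : G.compRel A ⟨p, hpA⟩ ⟨q, hqA⟩)) hprel
    intro w hw
    simp only [Walk.support, List.mem_cons, List.mem_singleton] at hw
    rcases hw with rfl | rfl | h
    · exact hpA
    · exact hqA
    · simp at h
  obtain ⟨p₁, q₁, hp₁A, hinc₁, hrel₁, hq₁A⟩ := unpack e₁ hd₁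
  obtain ⟨p₂, q₂, hp₂A, hinc₂, hrel₂, hq₂A⟩ := unpack e₂ hd₂
  obtain ⟨p₃, q₃, hp₃A, hinc₃, hrel₃, hq₃A⟩ := unpack e₃ hd₃
  -- a path P from p₁ to p₂ avoiding A
  obtain ⟨W12, hW12⟩ : G.compRel A ⟨p₁, hp₁A⟩ ⟨p₂, hp₂A⟩ :=
    (compRel_equivalence A).trans hrel₁ ((compRel_equivalence A).symm hrel₂)
  obtain ⟨P, hPpath, _, hPsub⟩ := W12.exists_path
  have hPsup : ∀ w ∈ P.support, w ∉ A := fun w hw => hW12 w (hPsub w hw)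
  -- a path from p₃ to p₁ avoiding A
  obtain ⟨W31, hW31⟩ : G.compRel A ⟨p₃, hp₃A⟩ ⟨p₁, hp₁A⟩ :=
    (compRel_equivalence A).trans hrel₃ ((compRel_equivalence A).symm hrel₁)
  obtain ⟨R, _, _, hRsub⟩ := W31.exists_path
  have hRsup : ∀ w ∈ R.support, w ∉ A := fun w hw => hW31 w (hRsub w hw)
  -- trim R at its first meeting point with P
  obtain ⟨z, hzP, Q, _, hQsup, hQdrop⟩ :=
    R.exists_prefix_to_set {w | w ∈ P.support} (P.start_mem_support)
  have hQnotP : ∀ f ∈ Q.edges, f ∉ P.edges := by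
    intro f hf hfP
    obtain ⟨x, hx1, hx2⟩ := Q.exists_endpoint_dropLast f hf
    exact hQdrop x hx2 (Walk.mem_support_of_mem_edges hfP hx1)
  -- split P at z
  obtain ⟨P₁, P₂, hP₁e, hP₂e, hP₁₂, hP₁s, hP₂s⟩ := P.exists_split hPpath z hzP
  -- z is in the component and not in A
  have hzA : z ∉ A := hPsup z hzP
  have hzrel : G.compRel A ⟨z, hzA⟩ z₀ := by
    refine (compRel_equivalence A).trans ((compRel_equivalence A).symm ?_) hrel₁
    exact ⟨P₁, fun w hw => hPsup w (hP₁s w hw)⟩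
  -- three edge-disjoint walks from z to q₁, q₂, q₃
  set w₁ : G.Walk z q₁ := P₁.reverse.append (.cons e₁ hinc₁ (.nil q₁)) with hw₁def
  set w₂ : G.Walk z q₂ := P₂.append (.cons e₂ hinc₂ (.nil q₂)) with hw₂def
  set w₃ : G.Walk z q₃ := Q.reverse.append (.cons e₃ hinc₃ (.nil q₃)) with hw₃def
  have hQsupA : ∀ w ∈ Q.support, w ∉ A := fun w hw => hRsup w (hQsup w hw)
  have hP₁supA : ∀ w ∈ P₁.support, w ∉ A := fun w hw => hPsup w (hP₁s w hw)
  have hP₂supA : ∀ w ∈ P₂.support, w ∉ A := fun w hw => hPsup w (hP₂s w hw)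
  -- membership characterizations
  have hmem : ∀ (a b : V) (e' : E) (hinc' : G.inc e' = s(a, b)) (T : G.Walk z a)
      (f : E), f ∈ (T.append (.cons e' hinc' (.nil b))).edges ↔ (f ∈ T.edges ∨ f = e') := by
    intro a b e' hinc' T f
    rw [Walk.edges_append]
    simp [Walk.edges]
  -- edges with an endpoint avoiding A cannot be one of the eᵢ
  have hcross : ∀ (T : G.Walk z p₁) (hT : ∀ w ∈ T.support, w ∉ A)
      (e' : E) (a b : V), G.inc e' = s(a, b) → b ∈ A → e' ∉ T.edges := by
    intro T hT e' a b hinc' hbA hmem'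
    exact hT b (Walk.mem_support_of_mem_edges hmem' (mem_inc_right hinc')) hbA
  -- disjointness of the three walks
  have hd12 : EdgeDisjoint w₁ w₂ := by
    intro f hf1 hf2
    rw [hw₁def, hmem] at hf1
    rw [hw₂def, hmem] at hf2
    rw [Walk.mem_edges_reverse] at hf1
    rcases hf1 with hf1 | rfl <;> rcases hf2 with hf2 | rfl
    · exact hP₁₂ f hf1 hf2
    · exact hP₁supA q₂ (Walk.mem_support_of_mem_edges hf1 (mem_inc_right hinc₂)) hq₂A
    · exact hP₂supA q₁ (Walk.mem_support_of_mem_edges hf2 (mem_inc_right hinc₁)) hq₁A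
    · exact h12 rfl
  have hd13 : EdgeDisjoint w₁ w₃ := by
    intro f hf1 hf3
    rw [hw₁def, hmem] at hf1
    rw [hw₃def, hmem] at hf3
    rw [Walk.mem_edges_reverse] at hf1
    rw [Walk.mem_edges_reverse] at hf3
    rcases hf1 with hf1 | rfl <;> rcases hf3 with hf3 | rfl
    · exact hQnotP f hf3 (hP₁e f hf1)
    · exact hP₁supA q₃ (Walk.mem_support_of_mem_edges hf1 (mem_inc_right hinc₃)) hq₃A
    · exact hQsupA q₁ (Walk.mem_support_of_mem_edges hf3 (mem_inc_right hinc₁)) hq₁A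
    · exact h13 rfl
  have hd23 : EdgeDisjoint w₂ w₃ := by
    intro f hf2 hf3
    rw [hw₂def, hmem] at hf2
    rw [hw₃def, hmem] at hf3
    rw [Walk.mem_edges_reverse] at hf3
    rcases hf2 with hf2 | rfl <;> rcases hf3 with hf3 | rfl
    · exact hQnotP f hf3 (hP₂e f hf2)
    · exact hP₂supA q₃ (Walk.mem_support_of_mem_edges hf2 (mem_inc_right hinc₃)) hq₃A
    · exact hQsupA q₂ (Walk.mem_support_of_mem_edges hf3 (mem_inc_right hinc₂)) hq₂A
    · exact h23 rfl
  -- z is three-edge-connected to q₁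
  have hzq₁ : ThreeEC G z q₁ := by
    refine threeEC_of_cut fun X hzX hq₁X => ?_
    by_cases hq₂X : q₂ ∈ X
    · exact cut_of_threeEC (hpair q₂ hq₂A q₁ hq₁A) X hq₂X hq₁X
    · by_cases hq₃X : q₃ ∈ X
      · exact cut_of_threeEC (hpair q₃ hq₃A q₁ hq₁A) X hq₃X hq₁X
      · exact three_le_delta_of_walks w₁ w₂ w₃ hzX hq₁X hq₂X hq₃X hd12 hd13 hd23
  exact hzA (hclosed q₁ hq₁A z hzq₁.symm)

end Multigraph

namespace Multigraph
variable {V E : Type} {G : Multigraph V E}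

/-- The vertex set of a component, given as a quotient element. -/
def compSetQ (G : Multigraph V E) (A : Set V) (c : Quotient (G.compSetoid A)) : Set V :=
  {w : V | ∃ h : w ∉ A, Quotient.mk (G.compSetoid A) ⟨w, h⟩ = c}

lemma comp_delta_le_two' [Finite V] [Finite E] (G : Multigraph V E) (A : Set V)
    (hclosed : ∀ a ∈ A, ∀ b, ThreeEC G a b → b ∈ A)
    (hpair : ∀ a ∈ A, ∀ b ∈ A, ThreeEC G a b)
    (c : Quotient (G.compSetoid A)) :
    (G.delta (G.compSetQ A c)).ncard ≤ 2 := by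
  obtain ⟨z₀, rfl⟩ := Quotient.exists_rep c
  have : G.compSetQ A (Quotient.mk _ z₀) = G.compSet A z₀ := by
    ext w
    constructor
    · rintro ⟨h, hq⟩
      exact ⟨h, compSetoid_mk_eq.mp hq⟩
    · rintro ⟨h, hr⟩
      exact ⟨h, compSetoid_mk_eq.mpr hr⟩
  rw [this]
  exact comp_delta_le_two G A hclosed hpair z₀

/-- An attachment of a component `c` at a vertex `a ∈ A` yields a crossing edge whose
`A`-endpoint is `a`. -/
lemma attached_delta {A : Set V} {c : Quotient (G.compSetoid A)} {a : {w : V // w ∈ A}}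
    (h : G.Attached A c a) :
    ∃ e : E, e ∈ G.delta (G.compSetQ A c) ∧ ∃ z : V, z ∉ A ∧ G.inc e = s(z, a.1) := by
  obtain ⟨e, z, hz, hinc⟩ := h
  refine ⟨e, ⟨z.1, a.1, by rw [hinc, Sym2.eq_swap], ⟨z.2, by rw [Subtype.eta]; exact hz⟩,
    fun hmem => hmem.1 a.2⟩, z.1, z.2, by rw [hinc, Sym2.eq_swap]⟩

/-- Given a crossing edge of `Xt` leaving a component inward, a second crossing edge of the
same component with `A`-endpoint a given attached vertex, they are distinct if the attached
vertices differ in `X`-membership. -/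
lemma comp_unique_crossing [Finite V] [Finite E] (G : Multigraph V E) (A : Set V)
    (hclosed : ∀ a ∈ A, ∀ b, ThreeEC G a b → b ∈ A)
    (hpair : ∀ a ∈ A, ∀ b ∈ A, ThreeEC G a b)
    (c : Quotient (G.compSetoid A)) (X : Set {w : V // w ∈ A})
    (α : {w : V // w ∈ A}) (hαX : α ∈ X) (hαatt : G.Attached A c α)
    (e₁ e₂ : E) (h₁ : e₁ ∈ G.delta (G.compSetQ A c)) (h₂ : e₂ ∈ G.delta (G.compSetQ A c))
    (b₁ b₂ : V) (hb₁ : b₁ ∈ A) (hb₂ : b₂ ∈ A)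
    (hX₁ : (⟨b₁, hb₁⟩ : {w : V // w ∈ A}) ∉ X) (hX₂ : (⟨b₂, hb₂⟩ : {w : V // w ∈ A}) ∉ X)
    (p₁ p₂ : V) (hp₁ : p₁ ∉ A) (hp₂ : p₂ ∉ A)
    (hinc₁ : G.inc e₁ = s(p₁, b₁)) (hinc₂ : G.inc e₂ = s(p₂, b₂)) : e₁ = e₂ := by
  by_contra hne
  obtain ⟨eα, heα, zα, hzα, hincα⟩ := attached_delta hαatt
  have hd1 : e₁ ≠ eα := by
    intro h
    rw [h, hincα, Sym2.eq_iff] at hinc₁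
    rcases hinc₁ with ⟨h1, h2⟩ | ⟨h1, h2⟩
    · have : (⟨b₁, hb₁⟩ : {w : V // w ∈ A}) = α := Subtype.ext h2.symm
      exact hX₁ (this ▸ hαX)
    · exact hp₁ (h2 ▸ α.2)
  have hd2 : e₂ ≠ eα := by
    intro h
    rw [h, hincα, Sym2.eq_iff] at hinc₂
    rcases hinc₂ with ⟨h1, h2⟩ | ⟨h1, h2⟩
    · have : (⟨b₂, hb₂⟩ : {w : V // w ∈ A}) = α := Subtype.ext h2.symm
      exact hX₂ (this ▸ hαX)
    · exact hp₂ (h2 ▸ α.2)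
  have h3 : 3 ≤ (G.delta (G.compSetQ A c)).ncard :=
    three_le_ncard (Set.toFinite _) h₁ h₂ heα hne hd1 hd2
  have h2' := comp_delta_le_two' G A hclosed hpair c
  omega

end Multigraph

instance finiteSym2 {α : Type} [Finite α] : Finite (Sym2 α) := by
  have hsurj : Function.Surjective (fun p : α × α => s(p.1, p.2)) := by
    intro z
    induction z using Sym2.ind with
    | _ a b => exact ⟨(a, b), rfl⟩
  exact Finite.of_surjective _ hsurj

theorem torso_aux {V E : Type} [Finite V] [Finite E]
    (G : Multigraph V E) (A : Set V)
    (hclosed : ∀ a ∈ A, ∀ b, ThreeEC G a b → b ∈ A)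
    (hpair : ∀ a ∈ A, ∀ b ∈ A, ThreeEC G a b) :
    ∀ x y : {u : V // u ∈ A}, x ≠ y → ThreePaths (G.torso A) x y := by
  classical
  intro x y hxy
  haveI : Finite (G.InnerE A) := by unfold Multigraph.InnerE; infer_instance
  haveI : Finite (G.RepE A) := by unfold Multigraph.RepE; infer_instance
  refine menger (G.torso A) x y hxy ?_
  intro X hxX hyX
  -- the corresponding cut in G
  set Xt : Set V := {w : V | (∃ h : w ∈ A, (⟨w, h⟩ : {u : V // u ∈ A}) ∈ X) ∨
      (∃ h : w ∉ A, ∃ a : {u : V // u ∈ A}, a ∈ X ∧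
        G.Attached A (Quotient.mk (G.compSetoid A) ⟨w, h⟩) a)} with hXt
  have hxXt : x.1 ∈ Xt := Or.inl ⟨x.2, by rwa [Subtype.eta]⟩
  have hyXt : y.1 ∉ Xt := by
    rintro (⟨h, hmem⟩ | ⟨h, _⟩)
    · rw [Subtype.eta] at hmem
      exact hyX hmem
    · exact h y.2
  have h3 : 3 ≤ (G.delta Xt).ncard :=
    cut_of_threeEC (hpair x.1 x.2 y.1 y.2) Xt hxXt hyXt
  -- map crossing edges of Xt to crossing edges of the torso
  have tmap : ∀ e ∈ G.delta Xt, ∃ t ∈ (G.torso A).delta X,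
      (∀ (q : E × Sym2 {w : V // w ∈ A}) (hq), t = Sum.inl ⟨q, hq⟩ → q.1 = e) ∧
      (∀ (q : Quotient (G.compSetoid A) × Sym2 {w : V // w ∈ A}) (hq), t = Sum.inr ⟨q, hq⟩ →
        ∃ (p b : V) (hp : p ∉ A) (hb : b ∈ A), G.inc e = s(p, b) ∧
          Quotient.mk (G.compSetoid A) ⟨p, hp⟩ = q.1 ∧ (⟨b, hb⟩ : {w : V // w ∈ A}) ∉ X) := by
    rintro e ⟨a, b, he, haXt, hbXt⟩
    by_cases haA : a ∈ A <;> by_cases hbA : b ∈ A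
    · -- inner edge
      have haX : (⟨a, haA⟩ : {u : V // u ∈ A}) ∈ X := by
        rcases haXt with ⟨h, hmem⟩ | ⟨h, _⟩
        · exact hmem
        · exact absurd haA h
      have hbX : (⟨b, hbA⟩ : {u : V // u ∈ A}) ∉ X := by
        intro hmem
        exact hbXt (Or.inl ⟨hbA, hmem⟩)
      refine ⟨Sum.inl ⟨(e, s(⟨a, haA⟩, ⟨b, hbA⟩)), by
          show G.inc e = _
          rw [Sym2.map_pair_eq, he]⟩, ?_, ?_, ?_⟩
      · exact ⟨⟨a, haA⟩, ⟨b, hbA⟩, rfl, haX, hbX⟩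
      · intro q hq h
        have := Sum.inl.inj h
        have hq1 : q = (e, s(⟨a, haA⟩, ⟨b, hbA⟩)) := (congrArg Subtype.val this).symm
        rw [hq1]
      · intro q hq h
        exact absurd h (by simp)
    · -- a ∈ A, b ∉ A : impossible, b's component is attached to a ∈ X
      exfalso
      have haX : (⟨a, haA⟩ : {u : V // u ∈ A}) ∈ X := by
        rcases haXt with ⟨h, hmem⟩ | ⟨h, _⟩
        · exact hmem
        · exact absurd haA h
      refine hbXt (Or.inr ⟨hbA, ⟨a, haA⟩, haX, e, ⟨b, hbA⟩, rfl, he⟩)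
    · -- a ∉ A, b ∈ A : replacement edge
      obtain ⟨ha, α, hαX, hαatt⟩ : ∃ h : a ∉ A, ∃ α : {u : V // u ∈ A}, α ∈ X ∧
          G.Attached A (Quotient.mk (G.compSetoid A) ⟨a, h⟩) α := by
        rcases haXt with ⟨h, _⟩ | ⟨h, α, hαX, hαatt⟩
        · exact absurd h haA
        · exact ⟨h, α, hαX, hαatt⟩
      have hbX : (⟨b, hbA⟩ : {u : V // u ∈ A}) ∉ X := by
        intro hmem
        exact hbXt (Or.inl ⟨hbA, hmem⟩)
      set c : Quotient (G.compSetoid A) := Quotient.mk (G.compSetoid A) ⟨a, ha⟩ with hc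
      have hediag : ¬(s(α, (⟨b, hbA⟩ : {u : V // u ∈ A}))).IsDiag := by
        rw [Sym2.mk_isDiag_iff]
        intro hcon
        exact hbX (hcon ▸ hαX)
      have hbatt : G.Attached A c ⟨b, hbA⟩ := ⟨e, ⟨a, ha⟩, rfl, by rw [he, Sym2.eq_swap]⟩
      have hsetEq : {a' : {u : V // u ∈ A} | a' ∈ s(α, (⟨b, hbA⟩ : {u : V // u ∈ A}))} =
          {a' | G.Attached A c a'} := by
        ext a'
        simp only [Set.mem_setOf_eq, Sym2.mem_iff]
        constructor
        · rintro (rfl | rfl)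
          · exact hαatt
          · exact hbatt
        · intro hatt
          by_contra hcon
          push_neg at hcon
          obtain ⟨ea', hea', za', hza', hinca'⟩ := attached_delta hatt
          obtain ⟨eα, heα, zα, hzα, hincα⟩ := attached_delta hαatt
          have heXt : e ∈ G.delta (G.compSetQ A c) :=
            ⟨a, b, he, ⟨ha, rfl⟩, fun hmem => hmem.1 hbA⟩
          -- the three edges ea', eα, e are distinct: contradiction with ncard ≤ 2
          have hAend : ∀ (e₁ e₂ : E) (z₁ z₂ w₁ w₂ : V), z₁ ∉ A → z₂ ∉ A → w₁ ∈ A → w₂ ∈ A →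
              G.inc e₁ = s(z₁, w₁) → G.inc e₂ = s(z₂, w₂) → e₁ = e₂ → w₁ = w₂ := by
            intro e₁ e₂ z₁ z₂ w₁ w₂ hz₁ hz₂ hw₁ hw₂ hi₁ hi₂ heq
            rw [heq, hi₂, Sym2.eq_iff] at hi₁
            rcases hi₁ with ⟨_, h2⟩ | ⟨h1, h2⟩
            · exact h2.symm
            · exact absurd (h1.symm ▸ hw₁) hz₂
          have d1 : ea' ≠ eα := by
            intro hcon'
            exact hcon.1 (Subtype.ext (hAend ea' eα za' zα a'.1 α.1 hza' hzα a'.2 α.2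
              hinca' hincα hcon'))
          have d2 : ea' ≠ e := by
            intro hcon'
            exact hcon.2 (Subtype.ext (hAend ea' e za' a a'.1 b hza' ha a'.2 hbA
              hinca' (by rw [he, Sym2.eq_swap]) hcon'))
          have d3 : eα ≠ e := by
            intro hcon'
            have := hAend eα e zα a α.1 b hzα ha α.2 hbA hincα (by rw [he, Sym2.eq_swap]) hcon'
            have hba : (⟨b, hbA⟩ : {u : V // u ∈ A}) = α := Subtype.ext this.symm
            exact hbX (hba ▸ hαX)
          have hge : 3 ≤ (G.delta (G.compSetQ A c)).ncard :=
            three_le_ncard (Set.toFinite _) hea' heα heXt d1 d2 d3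
          have hle := comp_delta_le_two' G A hclosed hpair c
          omega
      refine ⟨Sum.inr ⟨(c, s(α, ⟨b, hbA⟩)), hediag, hsetEq⟩, ?_, ?_, ?_⟩
      · exact ⟨α, ⟨b, hbA⟩, rfl, hαX, hbX⟩
      · intro q hq h
        exact absurd h (by simp)
      · intro q hq h
        have := Sum.inr.inj h
        have hq1 : q = (c, s(α, ⟨b, hbA⟩)) := (congrArg Subtype.val this).symm
        exact ⟨a, b, ha, hbA, he, by rw [hq1], hbX⟩
    · -- both outside A : impossible, same component
      exfalso
      have hcomp : Quotient.mk (G.compSetoid A) ⟨a, haA⟩ = Quotient.mk (G.compSetoid A)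
          ⟨b, hbA⟩ := by
        refine compSetoid_mk_eq.mpr ⟨.cons e he (.nil b), ?_⟩
        intro w hw
        simp only [Walk.support, List.mem_cons, List.mem_singleton] at hw
        rcases hw with rfl | rfl | h
        · exact haA
        · exact hbA
        · simp at h
      rcases haXt with ⟨h, _⟩ | ⟨h, α, hαX, hαatt⟩
      · exact haA h
      · exact hbXt (Or.inr ⟨hbA, α, hαX, by rwa [← hcomp]⟩)
  obtain ⟨e₁, e₂, e₃, hm₁, hm₂, hm₃, k12, k13, k23⟩ := exists_three_distinct h3
  obtain ⟨t₁, ht₁, hti₁, htr₁⟩ := tmap e₁ hm₁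
  obtain ⟨t₂, ht₂, hti₂, htr₂⟩ := tmap e₂ hm₂
  obtain ⟨t₃, ht₃, hti₃, htr₃⟩ := tmap e₃ hm₃
  have hdiff : ∀ (e e' : E), e ≠ e' →
      ∀ t, t ∈ (G.torso A).delta X →
      ((∀ (q : E × Sym2 {w : V // w ∈ A}) (hq), t = Sum.inl ⟨q, hq⟩ → q.1 = e) ∧
       (∀ (q : Quotient (G.compSetoid A) × Sym2 {w : V // w ∈ A}) (hq), t = Sum.inr ⟨q, hq⟩ →
        ∃ (p b : V) (hp : p ∉ A) (hb : b ∈ A), G.inc e = s(p, b) ∧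
          Quotient.mk (G.compSetoid A) ⟨p, hp⟩ = q.1 ∧ (⟨b, hb⟩ : {w : V // w ∈ A}) ∉ X)) →
      ((∀ (q : E × Sym2 {w : V // w ∈ A}) (hq), t = Sum.inl ⟨q, hq⟩ → q.1 = e') ∧
       (∀ (q : Quotient (G.compSetoid A) × Sym2 {w : V // w ∈ A}) (hq), t = Sum.inr ⟨q, hq⟩ →
        ∃ (p b : V) (hp : p ∉ A) (hb : b ∈ A), G.inc e' = s(p, b) ∧
          Quotient.mk (G.compSetoid A) ⟨p, hp⟩ = q.1 ∧ (⟨b, hb⟩ : {w : V // w ∈ A}) ∉ X)) →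
      False := by
    intro e e' hne t ht hspec hspec'
    rcases t with t | t
    · have h1 := hspec.1 t.1 t.2 rfl
      have h2 := hspec'.1 t.1 t.2 rfl
      exact hne (h1.symm.trans h2)
    · obtain ⟨p, b, hp, hb, hinc, hcls, hbX⟩ := hspec.2 t.1 t.2 rfl
      obtain ⟨p', b', hp', hb', hinc', hcls', hbX'⟩ := hspec'.2 t.1 t.2 rfl
      -- find an attached vertex of the component inside X
      obtain ⟨γ₁, γ₂, htinc, hγ₁, hγ₂⟩ := ht
      have htinc' : t.1.2 = s(γ₁, γ₂) := htinc
      have hγatt : G.Attached A t.1.1 γ₁ := by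
        have hmem : γ₁ ∈ {a' : {u : V // u ∈ A} | a' ∈ t.1.2} := by
          rw [Set.mem_setOf_eq, htinc']
          exact Sym2.mem_mk_left _ _
        rwa [t.2.2] at hmem
      refine hne (comp_unique_crossing G A hclosed hpair t.1.1 X γ₁ hγ₁ hγatt e e'
        ⟨p, b, hinc, ⟨hp, hcls⟩, fun hmem => hmem.1 hb⟩
        ⟨p', b', hinc', ⟨hp', hcls'⟩, fun hmem => hmem.1 hb'⟩
        b b' hb hb' hbX hbX' p p' hp hp' hinc hinc')
  have d12 : t₁ ≠ t₂ := fun h => hdiff e₁ e₂ k12 t₁ ht₁ ⟨hti₁, htr₁⟩ (h ▸ ⟨hti₂, htr₂⟩)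
  have d13 : t₁ ≠ t₃ := fun h => hdiff e₁ e₃ k13 t₁ ht₁ ⟨hti₁, htr₁⟩ (h ▸ ⟨hti₃, htr₃⟩)
  have d23 : t₂ ≠ t₃ := fun h => hdiff e₂ e₃ k23 t₂ ht₂ ⟨hti₂, htr₂⟩ (h ▸ ⟨hti₃, htr₃⟩)
  exact three_le_ncard (Set.toFinite _) ht₁ ht₂ ht₃ d12 d13 d23

/-- the torso of a 3-edge-connected component is 3-edge-connected:
any two distinct vertices are joined by three pairwise edge-disjoint paths in it. -/
theorem torso_threeEdgeConnected {V E : Type} [Finite V] [Finite E]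
    (G : Multigraph V E) (hG : G.Loopless) (v : V) :
    ∀ x y : {u : V // u ∈ {w | ThreeEC G v w}}, x ≠ y →
      ThreePaths (G.torso {w | ThreeEC G v w}) x y := by
  intro x y hxy
  exact torso_aux G {w | ThreeEC G v w}
    (fun a ha b hab => ThreeEC.trans ha hab)
    (fun a ha b hb => ThreeEC.trans (ThreeEC.symm ha) hb) x y hxy

end TCW
end

section
/- Tree-cut decompositions of bounded adhesion-width and bag-width are closed under immersions: if G contains H as an immersion and G admits a tree-cut decomposition with adhesion-width at most a and bag-width at most b, then H admits such a decomposition as well. -/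
namespace TCW

open Multigraph

/-- Any walk between vertices whose bag nodes are separated by the tree edge
`n₁n₂` contains an edge of the adhesion of that tree edge. -/
lemma cross_lemma {V E N : Type} {G : Multigraph V E} (D : TreeCutDecomp G N)
    (n₁ n₂ : N) :
    ∀ {u v : V} (w : G.Walk u v) (p q : N), u ∈ D.bag p → v ∈ D.bag q →
      ¬ (D.tree.deleteEdges {s(n₁, n₂)}).Reachable p q →
      ∃ e ∈ w.edges, e ∈ D.adhE n₁ n₂ := by
  intro u v w
  induction w with
  | nil x =>
    intro p q hp hq hr
    by_cases h : p = q
    · exact absurd (h ▸ SimpleGraph.Reachable.refl p) hr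
    · have := D.bag_disjoint p q h
      exact absurd (Set.mem_inter hp hq) (by simp [this])
  | cons e he tail ih =>
    rename_i u' v' w' 
    intro p q hp hq hr
    obtain ⟨r, hrmem⟩ := D.bag_covers v'
    by_cases hpr : (D.tree.deleteEdges {s(n₁, n₂)}).Reachable p r
    · obtain ⟨e', he'1, he'2⟩ := ih r q hrmem hq (fun h => hr (hpr.trans h))
      exact ⟨e', by simp [Multigraph.Walk.edges, he'1], he'2⟩
    · exact ⟨e, by simp [Multigraph.Walk.edges], u', v', p, r, he, hp, hrmem, hpr⟩

/-- Counting lemma: if every element of `S` has a witness edge on its path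
lying in `T`, and the paths are pairwise edge-disjoint, then `|S| ≤ |T|`. -/
lemma ncard_le_of_paths {E₁ V₂ E₂ : Type} [Finite E₂] {G : Multigraph V₂ E₂}
    (P : E₁ → (u : V₂) × (v : V₂) × G.Walk u v)
    (hdisj : ∀ e₁ e₂ : E₁, e₁ ≠ e₂ → EdgeDisjoint (P e₁).2.2 (P e₂).2.2)
    (S : Set E₁) (T : Set E₂)
    (hk : ∀ e ∈ S, ∃ e', e' ∈ (P e).2.2.edges ∧ e' ∈ T) :
    S.ncard ≤ T.ncard := by
  classical
  rcases S.eq_empty_or_nonempty with h | ⟨e₀, he₀⟩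
  · simp [h]
  · have hE2 : Nonempty E₂ := ⟨(hk e₀ he₀).choose⟩
    set g : E₁ → E₂ := fun e =>
      if h : ∃ e', e' ∈ (P e).2.2.edges ∧ e' ∈ T then h.choose
      else Classical.choice hE2 with hgdef
    have hg : ∀ e ∈ S, g e ∈ (P e).2.2.edges ∧ g e ∈ T := by
      intro e he
      have h := hk e he
      rw [hgdef]
      simp only [dif_pos h]
      exact ⟨h.choose_spec.1, h.choose_spec.2⟩
    apply Set.ncard_le_ncard_of_injOn g (fun e he => (hg e he).2)
    · intro e₁ h₁ e₂ h₂ heq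
      by_contra hne
      have h2 := (hg e₂ h₂).1
      rw [← heq] at h2
      exact hdisj e₁ e₂ hne (g e₁) (hg e₁ h₁).1 h2

/-- bounded adhesion-width and bag-width tree-cut decompositions are
closed under immersions. -/
theorem treeCutDecomp_immersion_closed {V₁ E₁ V₂ E₂ : Type}
    [Finite V₁] [Finite E₁] [Finite V₂] [Finite E₂]
    (G : Multigraph V₂ E₂) (H : Multigraph V₁ E₁)
    (hG : G.Loopless) (hH : H.Loopless) (himm : IsImmersion H G)
    (a b : ℕ) (N : Type) [Finite N] (D : TreeCutDecomp G N)
    (hDa : D.AdhWidthLE a) (hDb : D.BagWidthLE b) :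
    ∃ (N' : Type) (D' : TreeCutDecomp H N'), D'.AdhWidthLE a ∧ D'.BagWidthLE b := by
  classical
  obtain ⟨f, P, hf, hends, hpaths, hdisj⟩ := himm
  refine ⟨N, ⟨D.tree, D.isTree, fun t => f ⁻¹' D.bag t, ?_, ?_⟩, ?_, ?_⟩
  · intro n₁ n₂ hne
    have := D.bag_disjoint n₁ n₂ hne
    ext v
    simp only [Set.mem_inter_iff, Set.mem_preimage, Set.mem_empty_iff_false, iff_false,
      not_and]
    intro h1 h2
    exact absurd (Set.mem_inter h1 h2) (by simp [this])
  · intro v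
    obtain ⟨t, ht⟩ := D.bag_covers (f v)
    exact ⟨t, ht⟩
  · -- adhesion width
    set D' : TreeCutDecomp H N :=
      ⟨D.tree, D.isTree, fun t => f ⁻¹' D.bag t, _, _⟩ with hD'
    show D'.AdhWidthLE a
    have key : ∀ (n₁ n₂ : N) (e : E₁), e ∈ D'.adhE n₁ n₂ →
        ∃ e', e' ∈ (P e).2.2.edges ∧ e' ∈ D.adhE n₁ n₂ := by
      intro n₁ n₂ e he
      obtain ⟨x, y, p, q, hinc, hx, hy, hreach⟩ := he
      have h2 : s(f x, f y) = s((P e).1, (P e).2.1) := by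
        rw [← hends e, hinc, Sym2.map_pair_eq]
      rcases Sym2.eq_iff.mp h2 with ⟨h3, h4⟩ | ⟨h3, h4⟩
      · obtain ⟨e', h5, h6⟩ := cross_lemma D n₁ n₂ (P e).2.2 p q (h3 ▸ hx) (h4 ▸ hy) hreach
        exact ⟨e', h5, h6⟩
      · obtain ⟨e', h5, h6⟩ := cross_lemma D n₁ n₂ (P e).2.2 q p (h4 ▸ hy) (h3 ▸ hx)
          (fun h => hreach h.symm)
        exact ⟨e', h5, h6⟩
    have cardE : ∀ n₁ n₂ : N, (D'.adhE n₁ n₂).ncard ≤ (D.adhE n₁ n₂).ncard := by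
      intro n₁ n₂
      exact ncard_le_of_paths P hdisj _ _ (key n₁ n₂)
    intro t
    refine le_trans (ncard_le_of_paths P hdisj (D'.adhN t) (D.adhN t) ?_) (hDa t)
    intro e he
    obtain ⟨n, hadj, h3, hmem⟩ := he
    obtain ⟨e', h5, h6⟩ := key n t e hmem
    exact ⟨e', h5, n, hadj, le_trans h3 (cardE n t), h6⟩
  · -- bag width
    intro t
    refine le_trans ?_ (hDb t)
    exact Set.ncard_le_ncard_of_injOn f (fun v hv => hv) hf.injOn (D.bag t).toFinite

end TCW
end

section
/- If a tree-cut decomposition T of a graph G has GPRTW's width at most k, then T has adhesion-width at most k² and bag-width at most k. -/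
namespace TCW

open Multigraph

lemma _root_.Set.Finite.ncard_biUnion_le_ncard_mul {ι α : Type*} {t : Set ι} (ht : t.Finite)
    {s : ι → Set α} {n : ℕ} (hs : ∀ i ∈ t, (s i).ncard ≤ n) :
    (⋃ i ∈ t, s i).ncard ≤ t.ncard * n := by
  calc (⋃ i ∈ t, s i).ncard ≤ ∑ i ∈ ht.toFinset, (s i).ncard := by
        simpa using ht.toFinset.set_ncard_biUnion_le s
    _ ≤ ht.toFinset.card * n := by simpa using Finset.sum_le_card_nsmul _ _ n (by simpa using hs)
    _ = t.ncard * n := by rw [Set.ncard_eq_toFinset_card t ht]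

namespace TreeCutDecomp

variable {V E N : Type} {G : Multigraph V E} (D : TreeCutDecomp G N)

def boldNbrs (t : N) : Set N := {n | D.tree.Adj n t ∧ 3 ≤ (D.adhE n t).ncard}

lemma adhN_eq_biUnion_boldNbrs (t : N) : D.adhN t = ⋃ n ∈ D.boldNbrs t, D.adhE n t := by
  ext e
  simp [adhN, boldNbrs, and_assoc]

variable [Fintype N]

lemma ncard_adhE_le_gprtwWidth {n t : N} (hnt : D.tree.Adj n t) :
    (D.adhE n t).ncard ≤ D.gprtwWidth := by
  classical
  refine le_trans ?_ (le_max_left _ _)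
  simpa [hnt] using Finset.le_sup (f := fun p : N × N =>
    if D.tree.Adj p.1 p.2 then (D.adhE p.1 p.2).ncard else 0) (Finset.mem_univ (n, t))

lemma ncard_bag_add_ncard_boldNbrs_le_gprtwWidth (t : N) :
    (D.bag t).ncard + (D.boldNbrs t).ncard ≤ D.gprtwWidth :=
  le_trans (Finset.le_sup (f := fun t : N => (D.bag t).ncard + (D.boldNbrs t).ncard)
    (Finset.mem_univ t)) (le_max_right _ _)

lemma ncard_adhN_le_gprtwWidth_sq (t : N) : (D.adhN t).ncard ≤ D.gprtwWidth ^ 2 := by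
  calc (D.adhN t).ncard ≤ (D.boldNbrs t).ncard * D.gprtwWidth := by
        rw [adhN_eq_biUnion_boldNbrs]
        exact (D.boldNbrs t).toFinite.ncard_biUnion_le_ncard_mul fun n hn =>
          D.ncard_adhE_le_gprtwWidth hn.1
    _ ≤ D.gprtwWidth * D.gprtwWidth := by
        gcongr
        exact le_of_add_le_right (D.ncard_bag_add_ncard_boldNbrs_le_gprtwWidth t)
    _ = D.gprtwWidth ^ 2 := (sq _).symm

lemma adhWidth_le_gprtwWidth_sq : D.adhWidth ≤ D.gprtwWidth ^ 2 :=
  Finset.sup_le fun t _ => D.ncard_adhN_le_gprtwWidth_sq t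

lemma bagWidth_le_gprtwWidth : D.bagWidth ≤ D.gprtwWidth :=
  Finset.sup_le fun t _ =>
    le_of_add_le_left (D.ncard_bag_add_ncard_boldNbrs_le_gprtwWidth t)

end TreeCutDecomp

theorem gprtw_bounds_ab_general {V E N : Type} [Fintype N]
    (G : Multigraph V E) (D : TreeCutDecomp G N) (k : ℕ)
    (h : D.gprtwWidth = k) : D.adhWidth ≤ k ^ 2 ∧ D.bagWidth ≤ k := by
  subst h
  exact ⟨D.adhWidth_le_gprtwWidth_sq, D.bagWidth_le_gprtwWidth⟩

/-- a decomposition of GPRTW's width k has adhesion-width ≤ k² and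
bag-width ≤ k. -/
theorem gprtw_bounds_ab {V E N : Type} [Finite V] [Finite E] [Fintype N]
    (G : Multigraph V E) (hG : G.Loopless) (D : TreeCutDecomp G N) (k : ℕ)
    (h : D.gprtwWidth = k) : D.adhWidth ≤ k ^ 2 ∧ D.bagWidth ≤ k :=
  gprtw_bounds_ab_general G D k h

end TCW
end

section
/- If a tree-cut decomposition T of a graph G has adhesion-width a and bag-width b, then T has GPRTW's width at most a + b + 2. -/
namespace TCW

open Multigraph

/-- If deleting the edge `s(n,t)` disconnects `p` from `q`, every walk from `p`
to `q` must use that edge. -/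
lemma sep_mem_walk_edges {N : Type} {T : SimpleGraph N} {p q n t : N}
    (w : T.Walk p q) (hsep : ¬ (T.deleteEdges {s(n, t)}).Reachable p q) :
    s(n, t) ∈ w.edges := by
  by_contra h
  exact hsep ⟨w.toDeleteEdges {s(n, t)} (fun e he he' => h (Set.mem_singleton_iff.mp he' ▸ he))⟩

/-- A path cannot use three distinct edges all incident to the vertex `t`. -/
lemma three_darts_false {N : Type} {T : SimpleGraph N} {p q : N} {w : T.Walk p q}
    (hw : w.IsPath) {t n₁ n₂ n₃ : N}
    (h1 : T.Adj n₁ t) (h2 : T.Adj n₂ t) (h3 : T.Adj n₃ t)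
    (h12 : n₁ ≠ n₂) (h13 : n₁ ≠ n₃) (h23 : n₂ ≠ n₃)
    (e1 : s(n₁, t) ∈ w.edges) (e2 : s(n₂, t) ∈ w.edges) (e3 : s(n₃, t) ∈ w.edges) :
    False := by
  simp only [SimpleGraph.Walk.edges, List.mem_map] at e1 e2 e3
  obtain ⟨d₁, hd₁, hed₁⟩ := e1
  obtain ⟨d₂, hd₂, hed₂⟩ := e2
  obtain ⟨d₃, hd₃, hed₃⟩ := e3
  have hfst : (w.darts.map (·.fst)).Nodup := by
    rw [SimpleGraph.Walk.map_fst_darts]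
    exact hw.support_nodup.sublist (List.dropLast_sublist _)
  have hsnd : (w.darts.map (·.snd)).Nodup := by
    rw [SimpleGraph.Walk.map_snd_darts]
    exact hw.support_nodup.sublist (List.tail_sublist _)
  have finj := List.inj_on_of_nodup_map hfst
  have sinj := List.inj_on_of_nodup_map hsnd
  -- equal darts among our three force equal neighbours
  have key : ∀ (d d' : T.Dart) (m m' : N), m ≠ m' → T.Adj m t →
      d.edge = s(m, t) → d'.edge = s(m', t) → d ≠ d' := by
    intro d d' m m' hmm hadj he he' hdd
    subst hdd
    rw [he] at he'
    rcases Sym2.eq_iff.mp he' with ⟨rfl, -⟩ | ⟨rfl, rfl⟩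
    · exact hmm rfl
    · exact hadj.ne rfl
  -- from the edge equalities, each dart has `t` as its fst or its snd
  have cases' : ∀ (d : T.Dart) (m : N), d.edge = s(m, t) →
      (d.snd = t ∧ d.fst = m) ∨ (d.fst = t ∧ d.snd = m) := by
    intro d m he
    have : d.toProd = (m, t) ∨ d.toProd = (t, m) := Sym2.mk_eq_mk_iff.mp he
    rcases this with h | h
    · exact Or.inl ⟨congrArg Prod.snd h, congrArg Prod.fst h⟩
    · exact Or.inr ⟨congrArg Prod.fst h, congrArg Prod.snd h⟩
  rcases cases' d₁ n₁ hed₁ with ⟨t1, -⟩ | ⟨t1, -⟩ <;>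
  rcases cases' d₂ n₂ hed₂ with ⟨t2, -⟩ | ⟨t2, -⟩ <;>
  rcases cases' d₃ n₃ hed₃ with ⟨t3, -⟩ | ⟨t3, -⟩
  · exact key d₁ d₂ n₁ n₂ h12 h1 hed₁ hed₂ (sinj hd₁ hd₂ (t1.trans t2.symm))
  · exact key d₁ d₂ n₁ n₂ h12 h1 hed₁ hed₂ (sinj hd₁ hd₂ (t1.trans t2.symm))
  · exact key d₁ d₃ n₁ n₃ h13 h1 hed₁ hed₃ (sinj hd₁ hd₃ (t1.trans t3.symm))
  · exact key d₂ d₃ n₂ n₃ h23 h2 hed₂ hed₃ (finj hd₂ hd₃ (t2.trans t3.symm))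
  · exact key d₂ d₃ n₂ n₃ h23 h2 hed₂ hed₃ (sinj hd₂ hd₃ (t2.trans t3.symm))
  · exact key d₁ d₃ n₁ n₃ h13 h1 hed₁ hed₃ (finj hd₁ hd₃ (t1.trans t3.symm))
  · exact key d₁ d₂ n₁ n₂ h12 h1 hed₁ hed₂ (finj hd₁ hd₂ (t1.trans t2.symm))
  · exact key d₁ d₂ n₁ n₂ h12 h1 hed₁ hed₂ (finj hd₁ hd₂ (t1.trans t2.symm))

namespace TreeCutDecomp

variable {V E N : Type} {G : Multigraph V E}

lemma bag_eq_of_mem (D : TreeCutDecomp G N) {v : V} {p p' : N}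
    (h : v ∈ D.bag p) (h' : v ∈ D.bag p') : p = p' := by
  by_contra hne
  have := D.bag_disjoint p p' hne
  have hm := Set.mem_inter h h'
  rw [this] at hm
  exact hm

lemma sep_of_mem_adhE (D : TreeCutDecomp G N) {e : E} {x y : V} {p q n t : N}
    (hxy : G.inc e = s(x, y)) (hx : x ∈ D.bag p) (hy : y ∈ D.bag q)
    (he : e ∈ D.adhE n t) :
    ¬ (D.tree.deleteEdges {s(n, t)}).Reachable p q := by
  obtain ⟨x', y', p', q', h1, h2, h3, h4⟩ := he
  rw [hxy] at h1
  rcases Sym2.eq_iff.mp h1.symm with ⟨rfl, rfl⟩ | ⟨rfl, rfl⟩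
  · rwa [D.bag_eq_of_mem hx h2, D.bag_eq_of_mem hy h3]
  · rw [D.bag_eq_of_mem hx h3, D.bag_eq_of_mem hy h2]
    exact fun h => h4 h.symm

end TreeCutDecomp

/-- a decomposition of adhesion-width a and bag-width b has GPRTW's
width ≤ a + b + 2. -/
theorem ab_bounds_gprtw {V E N : Type} [Finite V] [Finite E] [Fintype N]
    (G : Multigraph V E) (hG : G.Loopless) (D : TreeCutDecomp G N) (a b : ℕ)
    (ha : D.adhWidth = a) (hb : D.bagWidth = b) :
    D.gprtwWidth ≤ a + b + 2 := by
  classical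
  have _instE : Fintype E := Fintype.ofFinite E
  subst ha hb
  -- the key bound: the number of bold edges at a node is at most the adhesion-width
  have hbold : ∀ t : N,
      {n : N | D.tree.Adj n t ∧ 3 ≤ (D.adhE n t).ncard}.ncard ≤ D.adhWidth := by
    intro t
    set S : Finset N :=
      Finset.univ.filter (fun n => D.tree.Adj n t ∧ 3 ≤ (D.adhE n t).ncard) with hS
    have hSrw : {n : N | D.tree.Adj n t ∧ 3 ≤ (D.adhE n t).ncard}.ncard = S.card := by
      rw [Set.ncard_eq_toFinset_card', Set.toFinset_setOf]
    rw [hSrw]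
    set U : Finset E := (D.adhN t).toFinset with hU
    have hsub : ∀ n ∈ S, ∀ e ∈ D.adhE n t, e ∈ D.adhN t := by
      intro n hn e he
      rw [hS, Finset.mem_filter] at hn
      exact ⟨n, hn.2.1, hn.2.2, he⟩
    have hadw : D.adhWidth = Finset.univ.sup fun t : N => (D.adhN t).ncard := rfl
    have hUcard : U.card ≤ D.adhWidth := by
      rw [hU, ← Set.ncard_eq_toFinset_card', hadw]
      exact Finset.le_sup (f := fun t : N => (D.adhN t).ncard) (Finset.mem_univ t)
    have hfilter : ∀ e ∈ U, (S.filter (fun n => e ∈ D.adhE n t)).card ≤ 2 := by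
      intro e heU
      by_contra hcon
      push_neg at hcon
      obtain ⟨n₁, n₂, n₃, hm1, hm2, hm3, h12, h13, h23⟩ := Finset.two_lt_card_iff.mp hcon
      rw [Finset.mem_filter, hS, Finset.mem_filter] at hm1 hm2 hm3
      -- get the endpoints' nodes
      have heA : e ∈ D.adhN t := by rwa [hU, Set.mem_toFinset] at heU
      obtain ⟨n₀, -, -, x, y, p, q, hxy, hx, hy, -⟩ := heA
      have s1 := D.sep_of_mem_adhE hxy hx hy hm1.2
      have s2 := D.sep_of_mem_adhE hxy hx hy hm2.2
      have s3 := D.sep_of_mem_adhE hxy hx hy hm3.2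
      obtain ⟨w⟩ := D.isTree.isConnected.preconnected p q
      have hwp := w.toPath.2
      exact three_darts_false hwp hm1.1.2.1 hm2.1.2.1 hm3.1.2.1 h12 h13 h23
        (sep_mem_walk_edges _ s1) (sep_mem_walk_edges _ s2) (sep_mem_walk_edges _ s3)
    have key : 3 * S.card ≤ 2 * U.card := by
      calc 3 * S.card = ∑ _n ∈ S, 3 := by rw [Finset.sum_const, smul_eq_mul, mul_comm]
        _ ≤ ∑ n ∈ S, (U.filter (fun e => e ∈ D.adhE n t)).card := by
            apply Finset.sum_le_sum
            intro n hn
            have hcard : (U.filter (fun e => e ∈ D.adhE n t)) = (D.adhE n t).toFinset := by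
              ext e
              simp only [Finset.mem_filter, Set.mem_toFinset, hU]
              exact ⟨fun h => h.2, fun h => ⟨hsub n hn e h, h⟩⟩
            rw [hcard, ← Set.ncard_eq_toFinset_card']
            rw [hS] at hn
            exact (Finset.mem_filter.mp hn).2.2
        _ = ∑ e ∈ U, (S.filter (fun n => e ∈ D.adhE n t)).card := by
            simp only [Finset.card_filter]
            exact Finset.sum_comm
        _ ≤ ∑ _e ∈ U, 2 := Finset.sum_le_sum hfilter
        _ = 2 * U.card := by rw [Finset.sum_const, smul_eq_mul, mul_comm]
    omega
  rw [TreeCutDecomp.gprtwWidth]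
  apply max_le
  · apply Finset.sup_le
    intro p _
    split_ifs with hadj
    · by_cases h3 : 3 ≤ (D.adhE p.1 p.2).ncard
      · have hsub : D.adhE p.1 p.2 ⊆ D.adhN p.2 := fun e he => ⟨p.1, hadj, h3, he⟩
        have h1 : (D.adhE p.1 p.2).ncard ≤ (D.adhN p.2).ncard :=
          Set.ncard_le_ncard hsub (Set.toFinite _)
        have h2 : (D.adhN p.2).ncard ≤ D.adhWidth := by
          rw [show D.adhWidth = Finset.univ.sup fun t : N => (D.adhN t).ncard from rfl]
          exact Finset.le_sup (f := fun t : N => (D.adhN t).ncard) (Finset.mem_univ p.2)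
        omega
      · omega
    · exact Nat.zero_le _
  · apply Finset.sup_le
    intro t _
    have h1 : (D.bag t).ncard ≤ D.bagWidth := by
      rw [show D.bagWidth = Finset.univ.sup fun t : N => (D.bag t).ncard from rfl]
      exact Finset.le_sup (f := fun t : N => (D.bag t).ncard) (Finset.mem_univ t)
    have h2 := hbold t
    omega

end TCW
end

section
/- If a graph G has a bramble of adhesion-order at least a, then for every edge separation {A,B} of G of order less than a, exactly one of the sides A, B contains the core of some slab of the bramble. -/
namespace TCW

open Multigraph

/-! A slab that `δ(A)` does not disconnect has its core on one side of `{A, Aᶜ}`, since any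
walk inside the slab between the two sides would use an edge of `δ(A)`. As `|δ(A)| < a`,
such a slab exists, so at least one side holds a core; two cores on opposite sides would be
disjoint, which the bramble forbids. -/

namespace Multigraph.Walk

variable {V E : Type} {G : Multigraph V E}

theorem exists_mem_edges_mem_delta {A : Set V} :
    ∀ {x y : V} (p : G.Walk x y), x ∈ A → y ∉ A → ∃ e ∈ p.edges, e ∈ G.delta A
  | _, _, .nil _, hx, hy => absurd hx hy
  | _, _, .cons (u := u) (v := v) e he p, hx, hy => by
    by_cases hv : v ∈ A
    · obtain ⟨f, hf, hfA⟩ := p.exists_mem_edges_mem_delta hv hy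
      exact ⟨f, List.mem_cons_of_mem _ hf, hfA⟩
    · exact ⟨e, List.mem_cons_self, u, v, he, hx, hv⟩

end Multigraph.Walk

section

variable {V E : Type} {G : Multigraph V E}

theorem Slab.core_subset_or_subset_compl_of_not_disconnects {s : Slab G} {A : Set V}
    (hs : ¬ s.Disconnects (G.delta A)) : s.core ⊆ A ∨ s.core ⊆ Aᶜ := by
  by_contra! h
  obtain ⟨x, hx, hxA⟩ := Set.not_subset.mp h.1
  obtain ⟨y, hy, hyA⟩ := Set.not_subset.mp h.2
  refine hs ⟨y, hy, x, hx, ?_⟩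
  rintro ⟨p, -, hp⟩
  obtain ⟨e, he, heA⟩ := p.exists_mem_edges_mem_delta (Set.notMem_compl_iff.mp hyA) hxA
  exact (hp e he).2 heA

theorem AdhOrderGE.exists_not_disconnects {B : Set (Slab G)} {a : ℕ} (hB : AdhOrderGE B a)
    {F : Set E} (hF : F.ncard < a) : ∃ s ∈ B, ¬ s.Disconnects F := by
  by_contra! h
  exact (hB F h).not_gt hF

theorem IsBramble.not_core_subset_and_core_subset_compl {B : Set (Slab G)} (hB : IsBramble B)
    (A : Set V) : ¬ ((∃ s ∈ B, s.core ⊆ A) ∧ ∃ s ∈ B, s.core ⊆ Aᶜ) := by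
  rintro ⟨⟨s₁, hs₁, hA⟩, s₂, hs₂, hAc⟩
  obtain ⟨z, hz₁, hz₂⟩ := hB s₁ hs₁ s₂ hs₂
  exact hAc hz₂ (hA hz₁)

end

theorem bramble_orients_separation_general {V E : Type}
    (G : Multigraph V E) (B : Set (Slab G)) (hB : IsBramble B)
    (a : ℕ) (hOrd : AdhOrderGE B a) (A : Set V) (hA : (G.delta A).ncard < a) :
    Xor' (∃ s ∈ B, s.core ⊆ A) (∃ s ∈ B, s.core ⊆ Aᶜ) := by
  obtain ⟨s, hsB, hs⟩ := hOrd.exists_not_disconnects hA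
  exact (xor_iff_or_and_not_and _ _).mpr
    ⟨(Slab.core_subset_or_subset_compl_of_not_disconnects hs).imp (⟨s, hsB, ·⟩) (⟨s, hsB, ·⟩),
      hB.not_core_subset_and_core_subset_compl A⟩

/-- for a bramble of adhesion-order ≥ a and a separation {A, Aᶜ} of
order < a, exactly one side contains the core of some slab of the bramble. -/
theorem bramble_orients_separation {V E : Type} [Finite V] [Finite E]
    (G : Multigraph V E) (hG : G.Loopless) (B : Set (Slab G)) (hB : IsBramble B)
    (a : ℕ) (hOrd : AdhOrderGE B a) (A : Set V) (hA : (G.delta A).ncard < a) :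
    Xor' (∃ s ∈ B, s.core ⊆ A) (∃ s ∈ B, s.core ⊆ Aᶜ) :=
  bramble_orients_separation_general G B hB a hOrd A hA

end TCW
end

section
/- If a graph G has a bramble of adhesion-order at least a and bag-order at least b, then G has an (a,b)-tangle, i.e., a consistent orientation of all edge separations of order less than a that avoids the collection Σ_{a,b} of small stars. -/
namespace TCW

open Multigraph

section Aux

variable {V E : Type} {G : Multigraph V E}

lemma walk_same_side {A : Set V} {u v : V} (p : G.Walk u v)
    (h : ∀ e ∈ p.edges, e ∉ G.delta A) : u ∈ A ↔ v ∈ A := by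
  induction p with
  | nil w => exact Iff.rfl
  | @cons x y z e he tail ih =>
    have he' : e ∉ G.delta A := h e (by simp [Walk.edges])
    have h2 : ∀ e' ∈ tail.edges, e' ∉ G.delta A :=
      fun e' hm => h e' (by simp [Walk.edges, hm])
    have hxy : x ∈ A ↔ y ∈ A := by
      constructor
      · intro hx; by_contra hy; exact he' ⟨x, y, he, hx, hy⟩
      · intro hy; by_contra hx; exact he' ⟨y, x, he.trans Sym2.eq_swap, hy, hx⟩
    exact hxy.trans (ih h2)

lemma walk_crosses {A : Set V} {u v : V} (p : G.Walk u v)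
    (hu : u ∈ A) (hv : v ∉ A) : ∃ e ∈ p.edges, e ∈ G.delta A := by
  by_contra h
  push_neg at h
  exact hv ((walk_same_side p h).mp hu)

lemma delta_compl (A : Set V) : G.delta Aᶜ = G.delta A := by
  ext e
  constructor <;> rintro ⟨x, y, hxy, hx, hy⟩
  · exact ⟨y, x, hxy.trans Sym2.eq_swap, by simpa using hy, by simpa using hx⟩
  · exact ⟨y, x, hxy.trans Sym2.eq_swap, hy, fun h => h hx⟩

lemma three_le_ncard {α : Type*} [Finite α] {S : Set α} {x y z : α}
    (hx : x ∈ S) (hy : y ∈ S) (hz : z ∈ S)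
    (hxy : x ≠ y) (hxz : x ≠ z) (hyz : y ≠ z) : 3 ≤ S.ncard := by
  have hsub : ({x, y, z} : Set α) ⊆ S := by
    intro w hw
    rcases hw with h | h | h <;> subst h <;> assumption
  have hcard : ({x, y, z} : Set α).ncard = 3 := by
    rw [Set.ncard_insert_of_notMem (by simp [hxy, hxz]),
      Set.ncard_insert_of_notMem (by simp [hyz]), Set.ncard_singleton]
  calc 3 = ({x, y, z} : Set α).ncard := hcard.symm
    _ ≤ S.ncard := Set.ncard_le_ncard hsub S.toFinite

lemma threeEC_delta [Finite E] {A : Set V} {x z : V}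
    (h : ThreeEC G x z) (hx : x ∈ A) (hz : z ∉ A) : 3 ≤ (G.delta A).ncard := by
  rcases h with rfl | ⟨p₁, p₂, p₃, _, _, _, d12, d13, d23⟩
  · exact absurd hx hz
  obtain ⟨e₁, he₁m, he₁⟩ := walk_crosses p₁ hx hz
  obtain ⟨e₂, he₂m, he₂⟩ := walk_crosses p₂ hx hz
  obtain ⟨e₃, he₃m, he₃⟩ := walk_crosses p₃ hx hz
  exact three_le_ncard he₁ he₂ he₃
    (fun h => d12 e₁ he₁m (h ▸ he₂m))
    (fun h => d13 e₁ he₁m (h ▸ he₃m))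
    (fun h => d23 e₂ he₂m (h ▸ he₃m))

/-- If `F` does not disconnect the slab `s` and `δ(A) ⊆ F`, then the core of
`s` lies entirely inside `A` or entirely inside `Aᶜ`. -/
lemma core_one_side {A : Set V} {F : Set E} {s : Slab G}
    (hδ : G.delta A ⊆ F) (hnd : ¬ Slab.Disconnects F s) :
    s.core ⊆ A ∨ s.core ⊆ Aᶜ := by
  unfold Slab.Disconnects at hnd
  push_neg at hnd
  obtain ⟨x₀, hx₀⟩ := s.core_nonempty
  have key : ∀ y ∈ s.core, (x₀ ∈ A ↔ y ∈ A) := by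
    intro y hy
    obtain ⟨p, _, hpe⟩ := hnd x₀ hx₀ y hy
    exact walk_same_side p (fun e he => fun hδA => (hpe e he).2 (hδ hδA))
  by_cases hx₀A : x₀ ∈ A
  · exact Or.inl (fun y hy => (key y hy).mp hx₀A)
  · exact Or.inr (fun y hy hyA => hx₀A ((key y hy).mpr hyA))

end Aux

/-- a bramble of adhesion-order ≥ a and bag-order ≥ b yields an
(a,b)-tangle. -/
theorem bramble_to_tangle {V E : Type} [Finite V] [Finite E]
    (G : Multigraph V E) (hG : G.Loopless) (a b : ℕ)
    (B : Set (Slab G)) (hB : IsBramble B)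
    (hBa : AdhOrderGE B a) (hBb : BagOrderGE B b) :
    ∃ L : Set (Set V), IsTangle G a b L := by
  classical
  -- Orient each separation toward the side containing a bramble core.
  refine ⟨{A | (G.delta A).ncard < a ∧ ∃ s ∈ B, s.core ⊆ Aᶜ}, ?_, ?_, ?_, ?_⟩
  · exact fun A hA => hA.1
  · intro A hA
    constructor
    · rintro ⟨_, s, hsB, hsub⟩ ⟨_, s', hs'B, hsub'⟩
      obtain ⟨w, hw, hw'⟩ := hB s hsB s' hs'B
      exact hsub hw (by simpa using hsub' hw')
    · intro hAc
      refine ⟨hA, ?_⟩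
      -- δ(A) does not disconnect some slab, whose core must avoid A.
      have hex : ∃ s ∈ B, ¬ Slab.Disconnects (G.delta A) s := by
        by_contra h
        push_neg at h
        exact absurd (hBa _ h) (not_le.mpr hA)
      obtain ⟨s, hsB, hnd⟩ := hex
      rcases core_one_side (subset_refl _) hnd with hca | hcac
      · exact absurd ⟨by rwa [delta_compl], s, hsB, by simpa using hca⟩ hAc
      · exact ⟨s, hsB, hcac⟩
  · rintro A ⟨_, s, hsB, hsub⟩ C ⟨_, s', hs'B, hsub'⟩
    obtain ⟨w, hw, hw'⟩ := hB s hsB s' hs'B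
    exact ⟨w, hsub hw, hsub' hw'⟩
  · rintro σ hσL hσne hσdisj ⟨h1, h2⟩
    set F := ⋃ A ∈ {A ∈ σ | 3 ≤ (G.delta A).ncard}, G.delta A with hF
    -- F does not disconnect some slab s.
    have hex : ∃ s ∈ B, ¬ Slab.Disconnects F s := by
      by_contra h
      push_neg at h
      exact absurd (hBa _ h) (not_le.mpr h1)
    obtain ⟨s, hsB, hnd⟩ := hex
    -- The core of s avoids every A ∈ σ.
    have hcore : ∀ A ∈ σ, s.core ⊆ Aᶜ := by
      intro A hA
      obtain ⟨hAlt, sA, hsAB, hsAsub⟩ := hσL hA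
      by_cases hbold : 3 ≤ (G.delta A).ncard
      · have hδF : G.delta A ⊆ F := by
          intro e he
          exact Set.mem_biUnion ⟨hA, hbold⟩ he
        rcases core_one_side hδF hnd with hca | hcac
        · obtain ⟨w, hw, hw'⟩ := hB s hsB sA hsAB
          exact absurd (hca hw) (by simpa using hsAsub hw')
        · exact hcac
      · -- A is thin: use 3-edge-connectivity of the core.
        intro x hx hxA
        obtain ⟨w, hw, hw'⟩ := hB s hsB sA hsAB
        have hwA : w ∉ A := hsAsub hw'
        exact hbold (threeEC_delta (s.core_tec x hx w hw) hxA hwA)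
    have hsubInter : s.core ⊆ ⋂ A ∈ σ, Aᶜ := by
      intro x hx
      simp only [Set.mem_iInter]
      exact fun A hA => hcore A hA hx
    have := hBb s hsB
    have hle : s.core.ncard ≤ (⋂ A ∈ σ, Aᶜ).ncard :=
      Set.ncard_le_ncard hsubInter (Set.toFinite _)
    omega

end TCW
end
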